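/- arXiv:2408.13094 — 7 statements merged into one kernel-verified Lean document; each statement's English description precedes it below -/
import Mathlib

section
/- Let (a_l)_{l≥0} be a sequence of nonnegative real numbers satisfying a_l ≤ 2·a_{l-1}^{1/2}·a_{l+1}^{1/2} for every integer l ≥ 1. Then for every integer k ≥ 2 and every integer l with 0 ≤ l ≤ k, one has a_l ≤ 2^{3·2^{k-2}-2} · a_0^{1-l/k} · a_k^{l/k}. -/
lemma selfBound {y E θ : ℝ} (hy : 0 ≤ y) (hE : 0 ≤ E) (hθ1 : θ < 1)
    (h : y ≤ E * y ^ θ) : y ≤ E ^ ((1:ℝ)/(1-θ)) := by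
  rcases hy.eq_or_lt with h0 | h0
  · rw [← h0]; exact Real.rpow_nonneg hE _
  · have hyθ : 0 < y ^ θ := Real.rpow_pos_of_pos h0 θ
    have h1 : y ^ (1 - θ) ≤ E := by
      rw [Real.rpow_sub h0, Real.rpow_one]
      exact (div_le_iff₀ hyθ).2 h
    calc y = (y ^ (1-θ)) ^ ((1:ℝ)/(1-θ)) := by
          rw [← Real.rpow_mul h0.le, mul_one_div, div_self (by linarith), Real.rpow_one]
      _ ≤ E ^ ((1:ℝ)/(1-θ)) :=
          Real.rpow_le_rpow (Real.rpow_nonneg h0.le _) h1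
            (div_nonneg zero_le_one (by linarith))

theorem stmt_0 (a : ℕ → ℝ) (ha : ∀ l, 0 ≤ a l)
    (hrec : ∀ l : ℕ, 1 ≤ l →
      a l ≤ 2 * a (l - 1) ^ ((1 : ℝ) / 2) * a (l + 1) ^ ((1 : ℝ) / 2)) :
    ∀ k : ℕ, 2 ≤ k → ∀ l : ℕ, l ≤ k →
      a l ≤ 2 ^ (3 * 2 ^ (k - 2) - 2 : ℕ) *
        a 0 ^ (1 - (l : ℝ) / (k : ℝ)) * a k ^ ((l : ℝ) / (k : ℝ)) := by
  intro k hk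
  induction k, hk using Nat.le_induction with
  | base =>
    intro l hl
    interval_cases l
    · norm_num
      linarith [ha 0]
    · norm_num
      have := hrec 1 le_rfl
      norm_num at this
      convert this using 3 <;> norm_num
    · norm_num
      linarith [ha 2]
  | succ k hk IH =>
    intro l hl
    have ha0 := ha 0
    have hak := ha k
    have hak1 := ha (k+1)
    have hakm := ha (k-1)
    have hK : (2:ℝ) ≤ (k:ℝ) := by exact_mod_cast hk
    have hK0 : (0:ℝ) < (k:ℝ) := by linarith
    have hK1 : (0:ℝ) < (k:ℝ) + 1 := by linarith
    set C : ℝ := 2 ^ (3*2^(k-2)-2 : ℕ) with hCdef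
    have hC1 : (1:ℝ) ≤ C := one_le_pow₀ one_le_two
    have hC0 : (0:ℝ) ≤ C := by linarith
    have hnat : 3*2^(k+1-2)-2 = 2 + (3*2^(k-2)-2)*2 := by
      obtain ⟨m, rfl⟩ := Nat.exists_eq_add_of_le hk
      have h1 : 2 + m + 1 - 2 = m + 1 := by omega
      have h2 : 2 + m - 2 = m := by omega
      rw [h1, h2, pow_succ]
      have := Nat.one_le_two_pow (n := m)
      omega
    have hconst : (2:ℝ) ^ (3*2^(k+1-2)-2 : ℕ) = 4 * C^2 := by
      rw [hnat, pow_add, pow_mul, hCdef]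
      norm_num
    have hcast : ((k+1:ℕ):ℝ) = (k:ℝ) + 1 := by push_cast; ring
    rcases eq_or_lt_of_le hl with rfl | hl'
    · rw [hcast, div_self (ne_of_gt hK1)]
      rw [show (1:ℝ) - 1 = 0 by ring, Real.rpow_zero, Real.rpow_one]
      have h1 : (1:ℝ) ≤ (2:ℝ) ^ (3*2^(k+1-2)-2 : ℕ) := one_le_pow₀ one_le_two
      nlinarith [ha (k+1)]
    · have hl2 : l ≤ k := Nat.lt_succ_iff.mp hl'
      have hL0 : (0:ℝ) ≤ (l:ℝ) := Nat.cast_nonneg l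
      have hLK : (l:ℝ) ≤ (k:ℝ) := by exact_mod_cast hl2
      set D : ℝ := (2*C^((1:ℝ)/2))^(2*(k:ℝ)/((k:ℝ)+1)) with hDdef
      have hCh0 : (0:ℝ) ≤ C^((1:ℝ)/2) := Real.rpow_nonneg hC0 _
      have hCh1 : (1:ℝ) ≤ C^((1:ℝ)/2) := Real.one_le_rpow hC1 (by norm_num)
      have hbase1 : (1:ℝ) ≤ 2*C^((1:ℝ)/2) := by linarith
      have hbase0 : (0:ℝ) ≤ 2*C^((1:ℝ)/2) := by linarith
      -- Step A: bound a k in terms of a 0 and a (k+1)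
      have hstep : a k ≤ D * a 0 ^ ((1:ℝ)/((k:ℝ)+1)) * a (k+1) ^ ((k:ℝ)/((k:ℝ)+1)) := by
        have hIH := IH (k-1) (Nat.sub_le k 1)
        have hc1 : ((k-1:ℕ):ℝ) = (k:ℝ) - 1 := by
          rw [Nat.cast_sub (by omega)]; norm_num
        rw [hc1, show (1:ℝ) - ((k:ℝ)-1)/(k:ℝ) = 1/(k:ℝ) by
          field_simp; try ring; try exact Or.inl trivial] at hIH
        have hr := hrec k (by omega)
        have hmid : a (k-1) ^ ((1:ℝ)/2)
            ≤ (C * a 0 ^ ((1:ℝ)/(k:ℝ)) * a k ^ (((k:ℝ)-1)/(k:ℝ))) ^ ((1:ℝ)/2) :=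
          Real.rpow_le_rpow hakm hIH (by norm_num)
        have h3 : a k ≤ 2 * (C * a 0 ^ ((1:ℝ)/(k:ℝ)) * a k ^ (((k:ℝ)-1)/(k:ℝ))) ^ ((1:ℝ)/2)
            * a (k+1) ^ ((1:ℝ)/2) := by
          refine hr.trans ?_
          exact mul_le_mul_of_nonneg_right
            (mul_le_mul_of_nonneg_left hmid (by norm_num))
            (Real.rpow_nonneg hak1 _)
        have hexp : (C * a 0 ^ ((1:ℝ)/(k:ℝ)) * a k ^ (((k:ℝ)-1)/(k:ℝ))) ^ ((1:ℝ)/2)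
            = C^((1:ℝ)/2) * a 0 ^ ((1:ℝ)/(2*(k:ℝ))) * a k ^ (((k:ℝ)-1)/(2*(k:ℝ))) := by
          rw [Real.mul_rpow (by positivity) (Real.rpow_nonneg hak _),
            Real.mul_rpow hC0 (Real.rpow_nonneg ha0 _),
            ← Real.rpow_mul ha0, ← Real.rpow_mul hak]
          rw [show (1:ℝ)/(k:ℝ) * (1/2) = 1/(2*(k:ℝ)) by
              field_simp; try ring; try exact Or.inl trivial,
            show ((k:ℝ)-1)/(k:ℝ) * (1/2) = ((k:ℝ)-1)/(2*(k:ℝ)) by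
              field_simp; try ring; try exact Or.inl trivial]
        rw [hexp] at h3
        set E : ℝ := 2 * C^((1:ℝ)/2) * a 0 ^ ((1:ℝ)/(2*(k:ℝ))) * a (k+1) ^ ((1:ℝ)/2) with hEdef
        have h4 : a k ≤ E * a k ^ (((k:ℝ)-1)/(2*(k:ℝ))) := by
          refine h3.trans_eq ?_
          rw [hEdef]; ring
        have hE0 : 0 ≤ E := by rw [hEdef]; positivity
        have hθ1 : ((k:ℝ)-1)/(2*(k:ℝ)) < 1 := by
          rw [div_lt_one (by linarith)]; linarith
        have h5 := selfBound hak hE0 hθ1 h4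
        have hie : (1:ℝ)/(1 - ((k:ℝ)-1)/(2*(k:ℝ))) = 2*(k:ℝ)/((k:ℝ)+1) := by
          rw [show (1:ℝ) - ((k:ℝ)-1)/(2*(k:ℝ)) = ((k:ℝ)+1)/(2*(k:ℝ)) by
            field_simp; try ring; try exact Or.inl trivial]
          rw [one_div_div]
        rw [hie] at h5
        refine h5.trans_eq ?_
        rw [hEdef, Real.mul_rpow (by positivity) (Real.rpow_nonneg hak1 _),
          Real.mul_rpow hbase0 (Real.rpow_nonneg ha0 _),
          ← Real.rpow_mul ha0, ← Real.rpow_mul hak1, ← hDdef]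
        rw [show (1:ℝ)/(2*(k:ℝ)) * (2*(k:ℝ)/((k:ℝ)+1)) = 1/((k:ℝ)+1) by
            field_simp; try ring; try exact Or.inl trivial,
          show (1:ℝ)/2 * (2*(k:ℝ)/((k:ℝ)+1)) = (k:ℝ)/((k:ℝ)+1) by
            field_simp; try ring; try exact Or.inl trivial]
      -- Step B: combine with IH at l
      have hIHl := IH l hl2
      have hD0 : 0 ≤ D := Real.rpow_nonneg hbase0 _
      have hD1 : (1:ℝ) ≤ D := Real.one_le_rpow hbase1 (by positivity)
      have h6 : a k ^ ((l:ℝ)/(k:ℝ)) ≤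
          D ^ ((l:ℝ)/(k:ℝ)) * a 0 ^ ((l:ℝ)/((k:ℝ)*((k:ℝ)+1))) * a (k+1) ^ ((l:ℝ)/((k:ℝ)+1)) := by
        have h6a := Real.rpow_le_rpow hak hstep (div_nonneg hL0 hK0.le)
        refine h6a.trans_eq ?_
        rw [Real.mul_rpow (by positivity) (Real.rpow_nonneg hak1 _),
          Real.mul_rpow hD0 (Real.rpow_nonneg ha0 _),
          ← Real.rpow_mul ha0, ← Real.rpow_mul hak1]
        rw [show (1:ℝ)/((k:ℝ)+1) * ((l:ℝ)/(k:ℝ)) = (l:ℝ)/((k:ℝ)*((k:ℝ)+1)) by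
            field_simp; try ring; try exact Or.inl trivial,
          show (k:ℝ)/((k:ℝ)+1) * ((l:ℝ)/(k:ℝ)) = (l:ℝ)/((k:ℝ)+1) by
            field_simp; try ring; try exact Or.inl trivial]
      have h7 : a l ≤ C * a 0 ^ (1 - (l:ℝ)/(k:ℝ)) *
          (D ^ ((l:ℝ)/(k:ℝ)) * a 0 ^ ((l:ℝ)/((k:ℝ)*((k:ℝ)+1))) * a (k+1) ^ ((l:ℝ)/((k:ℝ)+1))) := by
        refine hIHl.trans ?_
        rw [mul_assoc, mul_assoc]
        refine mul_le_mul_of_nonneg_left ?_ hC0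
        exact mul_le_mul_of_nonneg_left h6 (Real.rpow_nonneg ha0 _)
      -- merge powers of a 0
      have hsum : (1 - (l:ℝ)/(k:ℝ)) + (l:ℝ)/((k:ℝ)*((k:ℝ)+1)) = 1 - (l:ℝ)/((k:ℝ)+1) := by
        field_simp; try ring; try exact Or.inl trivial
      have hne : (1 - (l:ℝ)/(k:ℝ)) + (l:ℝ)/((k:ℝ)*((k:ℝ)+1)) ≠ 0 := by
        rw [hsum]
        have : (l:ℝ)/((k:ℝ)+1) < 1 := by rw [div_lt_one hK1]; linarith
        linarith
      have hmerge : a 0 ^ (1 - (l:ℝ)/(k:ℝ)) * a 0 ^ ((l:ℝ)/((k:ℝ)*((k:ℝ)+1)))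
          = a 0 ^ (1 - (l:ℝ)/((k:ℝ)+1)) := by
        rw [← Real.rpow_add' ha0 hne, hsum]
      -- constant bound
      have hDl : D ^ ((l:ℝ)/(k:ℝ)) ≤ D := by
        nth_rewrite 2 [← Real.rpow_one D]
        exact Real.rpow_le_rpow_of_exponent_le hD1 (by rw [div_le_one hK0]; exact hLK)
      have hsq : (2*C^((1:ℝ)/2)) ^ (((2:ℕ)):ℝ) = 4*C := by
        rw [Real.rpow_natCast, mul_pow, ← Real.rpow_natCast (C^((1:ℝ)/2)) 2,
          ← Real.rpow_mul hC0]
        norm_num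
      have hD4C : D ≤ 4*C := by
        have h8 : D ≤ (2*C^((1:ℝ)/2)) ^ (((2:ℕ)):ℝ) := by
          rw [hDdef]
          refine Real.rpow_le_rpow_of_exponent_le hbase1 ?_
          rw [div_le_iff₀ hK1]; push_cast; linarith
        exact h8.trans_eq hsq
      -- finish
      rw [hconst, hcast]
      have hfin : C * a 0 ^ (1 - (l:ℝ)/(k:ℝ)) *
          (D ^ ((l:ℝ)/(k:ℝ)) * a 0 ^ ((l:ℝ)/((k:ℝ)*((k:ℝ)+1))) * a (k+1) ^ ((l:ℝ)/((k:ℝ)+1)))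
          ≤ 4 * C^2 * a 0 ^ (1 - (l:ℝ)/((k:ℝ)+1)) * a (k+1) ^ ((l:ℝ)/((k:ℝ)+1)) := by
        have heq : C * a 0 ^ (1 - (l:ℝ)/(k:ℝ)) *
            (D ^ ((l:ℝ)/(k:ℝ)) * a 0 ^ ((l:ℝ)/((k:ℝ)*((k:ℝ)+1))) * a (k+1) ^ ((l:ℝ)/((k:ℝ)+1)))
            = (C * D ^ ((l:ℝ)/(k:ℝ))) *
              (a 0 ^ (1 - (l:ℝ)/(k:ℝ)) * a 0 ^ ((l:ℝ)/((k:ℝ)*((k:ℝ)+1)))) *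
              a (k+1) ^ ((l:ℝ)/((k:ℝ)+1)) := by ring
        rw [heq, hmerge]
        have hCD : C * D ^ ((l:ℝ)/(k:ℝ)) ≤ 4 * C^2 := by
          calc C * D ^ ((l:ℝ)/(k:ℝ)) ≤ C * D := mul_le_mul_of_nonneg_left hDl hC0
            _ ≤ C * (4*C) := mul_le_mul_of_nonneg_left hD4C hC0
            _ = 4 * C^2 := by ring
        have hp1 : (0:ℝ) ≤ a 0 ^ (1 - (l:ℝ)/((k:ℝ)+1)) := Real.rpow_nonneg ha0 _
        have hp2 : (0:ℝ) ≤ a (k+1) ^ ((l:ℝ)/((k:ℝ)+1)) := Real.rpow_nonneg hak1 _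
        exact mul_le_mul_of_nonneg_right (mul_le_mul_of_nonneg_right hCD hp1) hp2
      exact h7.trans hfin
end

section
/- Let c > 0 and let a_0, a_{k-1}, a_k, a_{k+1} be nonnegative real numbers with k ≥ 2 an integer. If a_k ≤ 2·a_{k-1}^{1/2}·a_{k+1}^{1/2} and a_{k-1} ≤ c·a_0^{1/k}·a_k^{1-1/k}, then a_k ≤ (4c)^{k/(k+1)} · a_0^{1/(k+1)} · a_{k+1}^{k/(k+1)}. -/
theorem stmt_1 (c : ℝ) (hc : 0 < c) (k : ℕ) (hk : 2 ≤ k)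
    (a0 akm1 ak akp1 : ℝ)
    (ha0 : 0 ≤ a0) (hakm1 : 0 ≤ akm1) (hak : 0 ≤ ak) (hakp1 : 0 ≤ akp1)
    (h1 : ak ≤ 2 * akm1 ^ ((1 : ℝ) / 2) * akp1 ^ ((1 : ℝ) / 2))
    (h2 : akm1 ≤ c * a0 ^ ((1 : ℝ) / (k : ℝ)) * ak ^ (1 - (1 : ℝ) / (k : ℝ))) :
    ak ≤ (4 * c) ^ ((k : ℝ) / ((k : ℝ) + 1)) *
      a0 ^ ((1 : ℝ) / ((k : ℝ) + 1)) * akp1 ^ ((k : ℝ) / ((k : ℝ) + 1)) := by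
  have hk2 : (2:ℝ) ≤ (k:ℝ) := by exact_mod_cast hk
  have hk0 : (0:ℝ) < (k:ℝ) := by linarith
  rcases hak.eq_or_lt with h0 | h0
  · rw [← h0]; positivity
  set K : ℝ := 2 * c ^ ((1:ℝ)/2) * a0 ^ ((1:ℝ)/(2*(k:ℝ))) * akp1 ^ ((1:ℝ)/2) with hK
  have hKnn : 0 ≤ K := by positivity
  have hA : ak ≤ K * ak ^ ((1 - (1:ℝ)/(k:ℝ))/2) := by
    have step : ak ≤ 2 * (c * a0 ^ ((1:ℝ)/(k:ℝ)) * ak ^ (1 - (1:ℝ)/(k:ℝ))) ^ ((1:ℝ)/2)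
        * akp1 ^ ((1:ℝ)/2) := by
      refine h1.trans ?_
      gcongr
    refine step.trans_eq ?_
    rw [hK, Real.mul_rpow (by positivity) (by positivity),
        Real.mul_rpow hc.le (by positivity),
        ← Real.rpow_mul ha0, ← Real.rpow_mul h0.le]
    rw [show (1:ℝ)/(k:ℝ) * (1/2) = 1/(2*(k:ℝ)) by ring,
        show (1 - (1:ℝ)/(k:ℝ)) * (1/2) = (1 - (1:ℝ)/(k:ℝ))/2 by ring]
    ring
  have hB : ak ^ ((1:ℝ) - (1 - (1:ℝ)/(k:ℝ))/2) ≤ K := by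
    rw [Real.rpow_sub h0, Real.rpow_one, div_le_iff₀ (Real.rpow_pos_of_pos h0 _)]
    exact hA
  have hq0 : (0:ℝ) ≤ 2*(k:ℝ)/((k:ℝ)+1) := by positivity
  have main := Real.rpow_le_rpow (Real.rpow_nonneg h0.le _) hB hq0
  rw [← Real.rpow_mul h0.le] at main
  rw [show ((1:ℝ) - (1 - (1:ℝ)/(k:ℝ))/2) * (2*(k:ℝ)/((k:ℝ)+1)) = 1 by
        field_simp; ring, Real.rpow_one] at main
  refine main.trans_eq ?_
  rw [hK, Real.mul_rpow (by positivity) (Real.rpow_nonneg hakp1 _),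
      Real.mul_rpow (by positivity) (Real.rpow_nonneg ha0 _),
      Real.mul_rpow (by norm_num) (Real.rpow_nonneg hc.le _),
      ← Real.rpow_mul hc.le, ← Real.rpow_mul ha0, ← Real.rpow_mul hakp1,
      show (4:ℝ)*c = 4*c from rfl,
      Real.mul_rpow (by norm_num : (0:ℝ) ≤ 4) hc.le,
      show (4:ℝ) = 2 ^ (2:ℝ) by norm_num [Real.rpow_natCast],
      ← Real.rpow_mul (by norm_num : (0:ℝ) ≤ 2)]
  rw [show (1:ℝ)/2 * (2*(k:ℝ)/((k:ℝ)+1)) = (k:ℝ)/((k:ℝ)+1) by ring,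
      show (1:ℝ)/(2*(k:ℝ)) * (2*(k:ℝ)/((k:ℝ)+1)) = 1/((k:ℝ)+1) by
        field_simp,
      show (2:ℝ)*(k:ℝ)/((k:ℝ)+1) = 2 * ((k:ℝ)/((k:ℝ)+1)) by ring]
end

section
/- Let d ≥ 1 and let a : ℕ^d → ℝ be a function with nonnegative values such that a(β + e_j) ≤ 2·a(β)^{1/2}·a(β + 2e_j)^{1/2} for every β ∈ ℕ^d and every 1 ≤ j ≤ d, where e_j is the j-th standard basis vector of ℕ^d. Then for every integer k ≥ 2 and every α ∈ ℕ^d with |α|_1 ≤ k, one has a(α) ≤ 2^{3·2^{k-2}-2} · a(0)^{1 - |α|_1/k} · (max_{β ∈ ℕ^d, |β|_1 = k} a(β))^{|α|_1/k}. -/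
open Real

lemma aux_split (K M : ℝ) (hK0 : 0 < K) (hK1 : 0 < K + 1) :
    M/(K*(K+1)) = M/K - M/(K+1) := by
  rw [div_sub_div _ _ (ne_of_gt hK0) (ne_of_gt hK1)]
  congr 1
  ring

set_option maxHeartbeats 2000000 in
lemma seq_lemma (b : ℕ → ℝ) (hb : ∀ m, 0 ≤ b m)
    (hrec : ∀ m, b (m+1) ≤ 2 * b m ^ ((1:ℝ)/2) * b (m+2) ^ ((1:ℝ)/2)) :
    ∀ k : ℕ, 2 ≤ k → ∀ m : ℕ, m ≤ k →
      b m ≤ 2 ^ (3 * 2 ^ (k-2) - 2 : ℕ) * b 0 ^ (1 - (m:ℝ)/(k:ℝ)) * b k ^ ((m:ℝ)/(k:ℝ)) := by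
  intro k hk
  induction k, hk using Nat.le_induction with
  | base =>
    intro m hm
    interval_cases m
    · simp only [Nat.cast_zero, zero_div, sub_zero, Real.rpow_one, Real.rpow_zero]
      norm_num
      nlinarith [hb 0]
    · have h := hrec 0
      norm_num at h ⊢
      convert h using 3 <;> norm_num
    · norm_num
      nlinarith [hb 2]
  | succ k hk IH =>
    set c : ℕ := 3 * 2 ^ (k-2) - 2 with hc
    have hc' : 3 * 2 ^ (k + 1 - 2) - 2 = 2 * c + 2 := by
      have e1 : k + 1 - 2 = (k - 2) + 1 := by omega
      rw [hc, e1, pow_succ]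
      have hP : 1 ≤ 2 ^ (k - 2) := Nat.one_le_two_pow
      omega
    have hone : (1:ℝ) ≤ 2 ^ (2 * c + 2) := one_le_pow₀ one_le_two
    have hK : (2:ℝ) ≤ (k:ℝ) := by exact_mod_cast hk
    have hK0 : (0:ℝ) < (k:ℝ) := by linarith
    have hK1 : (0:ℝ) < (k:ℝ) + 1 := by linarith
    intro m hm
    rw [hc']
    have hcast : ((k+1 : ℕ) : ℝ) = (k:ℝ) + 1 := by push_cast; ring
    rw [hcast]
    set K : ℝ := (k:ℝ) with hKdef
    set A : ℝ := b 0 with hA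
    set B : ℝ := b (k+1) with hB
    have hA0 : 0 ≤ A := hb 0
    have hB0 : 0 ≤ B := hb (k+1)
    rcases Nat.lt_or_ge m (k+1) with hmk | hmk
    swap
    · -- m = k + 1
      have hmeq : m = k + 1 := le_antisymm hm hmk
      subst hmeq
      rw [hcast]
      have e0 : 1 - (K+1)/(K+1) = 0 := by field_simp; norm_num
      have e1 : (K+1)/(K+1) = 1 := by field_simp
      rw [e0, e1, Real.rpow_zero, Real.rpow_one]
      nlinarith [hb (k+1), hone]
    have hmk' : m ≤ k := by omega
    rcases Nat.eq_zero_or_pos m with hm0 | hm0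
    · subst hm0
      simp only [Nat.cast_zero, zero_div, sub_zero, Real.rpow_one, Real.rpow_zero]
      nlinarith [mul_nonneg (sub_nonneg.2 hone) (hb 0)]
    -- now 1 ≤ m ≤ k
    have hmK : (m:ℝ) ≤ K := by rw [hKdef]; exact_mod_cast hmk'
    have hm0' : (0:ℝ) < m := by exact_mod_cast hm0
    rcases eq_or_lt_of_le (hb k) with hbk | hbk
    · -- b k = 0
      have h0 : b k ^ ((m:ℝ)/K) = 0 := by
        rw [← hbk, Real.zero_rpow]
        positivity
      have := IH m hmk'
      rw [h0, mul_zero] at this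
      have hrhs : 0 ≤ 2 ^ (2*c+2) * A ^ (1 - (m:ℝ)/(K+1)) * B ^ ((m:ℝ)/(K+1)) := by positivity
      linarith
    -- b k > 0
    have h2' := IH (k-1) (by omega)
    have hck : ((k-1 : ℕ) : ℝ) = K - 1 := by
      rw [Nat.cast_sub (by omega)]; simp [hKdef]
    rw [hck] at h2'
    have e1 : 1 - (K-1)/K = 1/K := by field_simp; ring
    have e2 : (K-1)/K * (1/2) = (K-1)/(2*K) := by ring
    rw [e1] at h2'
    have h1' := hrec (k-1)
    rw [(by omega : k - 1 + 1 = k), (by omega : k - 1 + 2 = k + 1)] at h1'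
    set θ : ℝ := (K-1)/(2*K) with hθ
    set C : ℝ := (2:ℝ) ^ (c:ℝ) with hC
    have hCn : (2:ℝ) ^ (c:ℕ) = C := by rw [hC, Real.rpow_natCast]
    rw [hCn] at h2'
    have hC0 : 0 ≤ C := by positivity
    set D : ℝ := 2 * C ^ ((1:ℝ)/2) * A ^ (1/(2*K)) * B ^ ((1:ℝ)/2) with hD
    have hD0 : 0 ≤ D := by positivity
    -- step: b k ≤ D * b k ^ θ
    have h3 : b k ≤ D * b k ^ θ := by
      have expand : (C * A ^ (1/K) * b k ^ ((K-1)/K)) ^ ((1:ℝ)/2)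
          = C ^ ((1:ℝ)/2) * A ^ (1/(2*K)) * b k ^ θ := by
        rw [Real.mul_rpow (by positivity) (by positivity),
            Real.mul_rpow hC0 (by positivity),
            ← Real.rpow_mul hA0, ← Real.rpow_mul (hb k), e2]
        congr 2
        ring
      have hd : b (k-1) ^ ((1:ℝ)/2) ≤ C ^ ((1:ℝ)/2) * A ^ (1/(2*K)) * b k ^ θ := by
        rw [← expand]
        exact Real.rpow_le_rpow (hb _) h2' (by norm_num)
      calc b k ≤ 2 * b (k-1) ^ ((1:ℝ)/2) * B ^ ((1:ℝ)/2) := h1'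
        _ ≤ 2 * (C ^ ((1:ℝ)/2) * A ^ (1/(2*K)) * b k ^ θ) * B ^ ((1:ℝ)/2) := by
            have hBn : 0 ≤ B ^ ((1:ℝ)/2) := by positivity
            nlinarith [Real.rpow_nonneg (hb (k-1)) ((1:ℝ)/2), hd]
        _ = D * b k ^ θ := by rw [hD]; ring
    -- step: b k ^ (1-θ) ≤ D
    have h4 : b k ^ (1-θ) ≤ D := by
      have key : b k ^ (1-θ) * b k ^ θ = b k := by
        rw [← Real.rpow_add hbk]; norm_num
      have hθpos : 0 < b k ^ θ := Real.rpow_pos_of_pos hbk θ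
      have h3' : b k ^ (1-θ) * b k ^ θ ≤ D * b k ^ θ := by rw [key]; exact h3
      exact le_of_mul_le_mul_right h3' hθpos
    -- step: b k ≤ D ^ p
    set p : ℝ := 2*K/(K+1) with hp
    have hp0 : 0 ≤ p := by positivity
    have hexp1 : (1-θ) * p = 1 := by rw [hθ, hp]; field_simp; ring
    have h5 : b k ≤ D ^ p := by
      have h := Real.rpow_le_rpow (Real.rpow_nonneg (hb k) _) h4 hp0
      rwa [← Real.rpow_mul (hb k), hexp1, Real.rpow_one] at h
    -- expand D ^ q where q = p * (m/K) = 2m/(K+1)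
    set q : ℝ := 2*(m:ℝ)/(K+1) with hq
    have hq0 : 0 ≤ q := by positivity
    have hDq : (D ^ p) ^ ((m:ℝ)/K) = D ^ q := by
      rw [← Real.rpow_mul hD0]
      congr 1
      rw [hp, hq]; field_simp
    have hDqexp : D ^ q = (2:ℝ) ^ (q + (c:ℝ)*q/2) * A ^ ((m:ℝ)/(K*(K+1))) * B ^ ((m:ℝ)/(K+1)) := by
      rw [hD, Real.mul_rpow (by positivity) (by positivity),
          Real.mul_rpow (by positivity) (by positivity),
          Real.mul_rpow (by norm_num) (by positivity),
          ← Real.rpow_mul hC0, ← Real.rpow_mul hA0, ← Real.rpow_mul hB0, hC,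
          ← Real.rpow_mul (by norm_num : (0:ℝ) ≤ 2),
          ← Real.rpow_add (by norm_num : (0:ℝ) < 2)]
      rw [show (1:ℝ)/(2*K)*q = (m:ℝ)/(K*(K+1)) by rw [hq]; field_simp]
      rw [show (1:ℝ)/2*q = (m:ℝ)/(K+1) by rw [hq]; ring]
      rw [show q + (c:ℝ)*((m:ℝ)/(K+1)) = q + (c:ℝ)*q/2 by rw [hq]; ring]
    -- main chain
    have chain : b m ≤ C * A ^ (1 - (m:ℝ)/K) * (D^p) ^ ((m:ℝ)/K) := by
      have h6 := IH m hmk'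
      rw [hCn] at h6
      have h7 : b k ^ ((m:ℝ)/K) ≤ (D^p) ^ ((m:ℝ)/K) :=
        Real.rpow_le_rpow (hb k) h5 (by positivity)
      have h8 : 0 ≤ C * A ^ (1 - (m:ℝ)/K) := by positivity
      calc b m ≤ C * A ^ (1 - (m:ℝ)/K) * b k ^ ((m:ℝ)/K) := h6
        _ ≤ C * A ^ (1 - (m:ℝ)/K) * (D^p) ^ ((m:ℝ)/K) :=
            mul_le_mul_of_nonneg_left h7 h8
    rw [hDq, hDqexp] at chain
    -- combine powers of A
    have hAcomb : A ^ (1 - (m:ℝ)/K) * A ^ ((m:ℝ)/(K*(K+1))) = A ^ (1 - (m:ℝ)/(K+1)) := by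
      have hA1 : 0 ≤ 1 - (m:ℝ)/K := by
        rw [sub_nonneg]
        exact div_le_one_of_le₀ hmK (le_of_lt hK0)
      have hsplit : (m:ℝ)/(K*(K+1)) = (m:ℝ)/K - (m:ℝ)/(K+1) :=
        aux_split K (m:ℝ) hK0 hK1
      have eexp : 1 - (m:ℝ)/(K+1) = (1 - (m:ℝ)/K) + (m:ℝ)/(K*(K+1)) := by
        rw [hsplit]; ring
      rw [eexp, Real.rpow_add_of_nonneg hA0 hA1 (by positivity)]
    have hpow2 : C * (2:ℝ) ^ (q + (c:ℝ)*q/2) ≤ 2 ^ (2*c+2 : ℕ) := by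
      rw [hC, ← Real.rpow_add (by norm_num : (0:ℝ) < 2), ← Real.rpow_natCast 2 (2*c+2)]
      apply Real.rpow_le_rpow_of_exponent_le one_le_two
      have hqle : q ≤ 2 := by
        rw [hq, div_le_iff₀ hK1]; nlinarith
      push_cast
      nlinarith [mul_nonneg (sub_nonneg.2 hqle) (Nat.cast_nonneg c : (0:ℝ) ≤ c)]
    have h9 : 0 ≤ A ^ (1 - (m:ℝ)/(K+1)) := by positivity
    have h10 : 0 ≤ B ^ ((m:ℝ)/(K+1)) := by positivity
    calc b m ≤ C * A ^ (1 - (m:ℝ)/K) * ((2:ℝ) ^ (q + (c:ℝ)*q/2) * A ^ ((m:ℝ)/(K*(K+1))) * B ^ ((m:ℝ)/(K+1))) := chain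
      _ = (C * (2:ℝ) ^ (q + (c:ℝ)*q/2)) * (A ^ (1 - (m:ℝ)/K) * A ^ ((m:ℝ)/(K*(K+1)))) * B ^ ((m:ℝ)/(K+1)) := by ring
      _ = (C * (2:ℝ) ^ (q + (c:ℝ)*q/2)) * A ^ (1 - (m:ℝ)/(K+1)) * B ^ ((m:ℝ)/(K+1)) := by
            rw [hAcomb]
      _ ≤ 2 ^ (2*c+2 : ℕ) * A ^ (1 - (m:ℝ)/(K+1)) * B ^ ((m:ℝ)/(K+1)) :=
            mul_le_mul_of_nonneg_right (mul_le_mul_of_nonneg_right hpow2 h9) h10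

theorem stmt_2 (d : ℕ) (hd : 1 ≤ d) (a : (Fin d → ℕ) → ℝ)
    (ha : ∀ β, 0 ≤ a β)
    (hrec : ∀ (β : Fin d → ℕ) (j : Fin d),
      a (β + Pi.single j 1) ≤
        2 * a β ^ ((1 : ℝ) / 2) * a (β + 2 • Pi.single j 1) ^ ((1 : ℝ) / 2)) :
    ∀ k : ℕ, 2 ≤ k → ∀ α : Fin d → ℕ, (∑ i, α i) ≤ k →
      a α ≤ 2 ^ (3 * 2 ^ (k - 2) - 2 : ℕ) *
        a 0 ^ (1 - ((∑ i, α i : ℕ) : ℝ) / (k : ℝ)) *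
        (sSup {x : ℝ | ∃ β : Fin d → ℕ, (∑ i, β i) = k ∧ x = a β}) ^
          (((∑ i, α i : ℕ) : ℝ) / (k : ℝ)) := by
  -- the sup sequence
  set S : ℕ → Set ℝ := fun m => {x : ℝ | ∃ β : Fin d → ℕ, (∑ i, β i) = m ∧ x = a β} with hS
  set b : ℕ → ℝ := fun m => sSup (S m) with hbdef
  have hwitness : ∀ m : ℕ, a (Pi.single (⟨0, hd⟩ : Fin d) m) ∈ S m := by
    intro m
    exact ⟨Pi.single (⟨0, hd⟩ : Fin d) m, by simp, rfl⟩
  have hSne : ∀ m, (S m).Nonempty := fun m => ⟨_, hwitness m⟩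
  have hSfin : ∀ m, (S m).Finite := by
    intro m
    apply Set.Finite.subset (((Finset.Nat.antidiagonalTuple d m).finite_toSet).image a)
    rintro x ⟨β, hβ, rfl⟩
    exact ⟨β, by simpa [Finset.Nat.mem_antidiagonalTuple], rfl⟩
  have hble : ∀ β : Fin d → ℕ, a β ≤ b (∑ i, β i) := fun β =>
    le_csSup ((hSfin _).bddAbove) ⟨β, rfl, rfl⟩
  have hb0 : ∀ m, 0 ≤ b m := by
    intro m
    have h := hble (Pi.single (⟨0, hd⟩ : Fin d) m)
    rw [show (∑ i, Pi.single (⟨0, hd⟩ : Fin d) m i) = m by simp] at h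
    exact le_trans (ha _) h
  have hbzero : b 0 = a 0 := by
    apply le_antisymm
    · apply csSup_le (hSne 0)
      rintro x ⟨β, hβ, rfl⟩
      have : β = 0 := by
        funext i
        have := (Finset.sum_eq_zero_iff.mp hβ) i (Finset.mem_univ i)
        simpa using this
      rw [this]
    · exact le_csSup ((hSfin 0).bddAbove) ⟨0, by simp, rfl⟩
  have hbrec : ∀ m, b (m+1) ≤ 2 * b m ^ ((1:ℝ)/2) * b (m+2) ^ ((1:ℝ)/2) := by
    intro m
    apply csSup_le (hSne (m+1))
    rintro x ⟨α, hα, rfl⟩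
    obtain ⟨j, -, hj⟩ := Finset.exists_ne_zero_of_sum_ne_zero
      (by rw [hα]; omega : (∑ i, α i) ≠ 0)
    set β : Fin d → ℕ := Function.update α j (α j - 1) with hβ
    have hβα : β + Pi.single j 1 = α := by
      funext i
      by_cases h : i = j
      · subst h
        simp only [Pi.add_apply, hβ, Function.update_self, Pi.single_eq_same]
        omega
      · simp [hβ, Function.update_of_ne h, Pi.single_eq_of_ne h]
    have hsum1 : (∑ i, (β + Pi.single j 1 : Fin d → ℕ) i) = (∑ i, β i) + 1 := by
      simp [Finset.sum_add_distrib]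
    have hsumβ : (∑ i, β i) = m := by
      have := hsum1
      rw [hβα, hα] at this
      omega
    have hsum2 : (∑ i, (β + 2 • Pi.single j 1 : Fin d → ℕ) i) = m + 2 := by
      simp [Finset.sum_add_distrib, hsumβ, ← Finset.mul_sum]
    calc a α = a (β + Pi.single j 1) := by rw [hβα]
      _ ≤ 2 * a β ^ ((1:ℝ)/2) * a (β + 2 • Pi.single j 1) ^ ((1:ℝ)/2) := hrec β j
      _ ≤ 2 * b m ^ ((1:ℝ)/2) * b (m+2) ^ ((1:ℝ)/2) := by
          have h1 : a β ≤ b m := by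
            have := hble β; rwa [hsumβ] at this
          have h2 : a (β + 2 • Pi.single j 1) ≤ b (m+2) := by
            have := hble (β + 2 • Pi.single j 1); rwa [hsum2] at this
          have r1 : a β ^ ((1:ℝ)/2) ≤ b m ^ ((1:ℝ)/2) :=
            Real.rpow_le_rpow (ha β) h1 (by norm_num)
          have r2 : a (β + 2 • Pi.single j 1) ^ ((1:ℝ)/2) ≤ b (m+2) ^ ((1:ℝ)/2) :=
            Real.rpow_le_rpow (ha _) h2 (by norm_num)
          have n1 : 0 ≤ a β ^ ((1:ℝ)/2) := Real.rpow_nonneg (ha β) _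
          have n2 : 0 ≤ b m ^ ((1:ℝ)/2) := Real.rpow_nonneg (hb0 m) _
          have n3 : 0 ≤ b (m+2) ^ ((1:ℝ)/2) := Real.rpow_nonneg (hb0 (m+2)) _
          nlinarith [Real.rpow_nonneg (ha (β + 2 • Pi.single j 1)) ((1:ℝ)/2)]
  intro k hk α hα
  have hfinal := seq_lemma b hb0 hbrec k hk (∑ i, α i) hα
  rw [hbzero] at hfinal
  exact le_trans (hble α) hfinal
end

section
/- Let u : ℝ → ℂ be twice continuously differentiable, and suppose u, u′ and u″ are Lebesgue integrable on ℝ. Then ∫_ℝ |u′(x)| dx ≤ 2 · (∫_ℝ |u(x)| dx)^{1/2} · (∫_ℝ |u″(x)| dx)^{1/2}. -/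
open MeasureTheory

set_option maxHeartbeats 1000000 in
theorem stmt_8 (u : ℝ → ℂ) (hu : ContDiff ℝ 2 u)
    (hi : MeasureTheory.Integrable u)
    (hi' : MeasureTheory.Integrable (deriv u))
    (hi'' : MeasureTheory.Integrable (deriv (deriv u))) :
    (∫ x : ℝ, ‖deriv u x‖) ≤
      2 * (∫ x : ℝ, ‖u x‖) ^ ((1 : ℝ) / 2) *
        (∫ x : ℝ, ‖deriv (deriv u) x‖) ^ ((1 : ℝ) / 2) := by
  -- smoothness facts
  have hu2 : ContDiff ℝ (1 + 1 : ℕ) u := by norm_num; exact hu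
  have hdu : Differentiable ℝ u := hu.differentiable (by norm_num)
  have hu1 : ContDiff ℝ 1 (deriv u) := (contDiff_succ_iff_deriv.mp hu2).2.2
  have hd1 : Differentiable ℝ (deriv u) := hu1.differentiable one_ne_zero
  have hc2 : Continuous (deriv (deriv u)) := hu1.continuous_deriv le_rfl
  have hc1 : Continuous (deriv u) := hd1.continuous
  set A := ∫ x : ℝ, ‖u x‖ with hA
  set B := ∫ x : ℝ, ‖deriv (deriv u) x‖ with hB
  set C := ∫ x : ℝ, ‖deriv u x‖ with hC
  have hA0 : 0 ≤ A := integral_nonneg fun x => norm_nonneg _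
  have hB0 : 0 ≤ B := integral_nonneg fun x => norm_nonneg _
  have hC0 : 0 ≤ C := integral_nonneg fun x => norm_nonneg _
  have key : ∀ h : ℝ, 0 < h → h * C ≤ 2 * A + h ^ 2 / 2 * B := by
    intro h hh
    have hh0 : (0:ℝ) ≤ h := hh.le
    -- pointwise bound
    have ptwise : ∀ x : ℝ, h * ‖deriv u x‖ ≤
        ‖u (x + h)‖ + ‖u x‖ +
          ∫ s in (0:ℝ)..h, |h - s| * ‖deriv (deriv u) (x + s)‖ := by
      intro x
      have hin : ∀ s : ℝ, HasDerivAt (fun s => u (x + s)) (deriv u (x + s)) s := by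
        intro s
        exact HasDerivAt.comp_const_add x s ((hdu (x + s)).hasDerivAt)
      have hin' : ∀ s : ℝ, HasDerivAt (fun s => deriv u (x + s)) (deriv (deriv u) (x + s)) s := by
        intro s
        exact HasDerivAt.comp_const_add x s ((hd1 (x + s)).hasDerivAt)
      have eq1 : (∫ s in (0:ℝ)..h, deriv u (x + s)) = u (x + h) - u x := by
        have := intervalIntegral.integral_eq_sub_of_hasDerivAt
          (f := fun s => u (x + s)) (f' := fun s => deriv u (x + s))
          (fun s _ => hin s)
          ((hc1.comp (continuous_const.add continuous_id)).intervalIntegrable 0 h)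
        simpa using this
      have hF : ∀ s : ℝ, HasDerivAt (fun s => (h - s) • deriv u (x + s))
          ((h - s) • deriv (deriv u) (x + s) - deriv u (x + s)) s := by
        intro s
        have hcs : HasDerivAt (fun s : ℝ => h - s) (-1) s := by
          simpa using ((hasDerivAt_id s).const_sub h)
        have := hcs.fun_smul (hin' s)
        simpa [neg_smul, sub_eq_add_neg, add_comm] using this
      have hcont2 : Continuous fun s => (h - s) • deriv (deriv u) (x + s) :=
        (continuous_const.sub continuous_id).smul
          (hc2.comp (continuous_const.add continuous_id))
      have hII1 : IntervalIntegrable (fun s => deriv u (x + s)) volume 0 h :=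
        (hc1.comp (continuous_const.add continuous_id)).intervalIntegrable 0 h
      have hII2 : IntervalIntegrable (fun s => (h - s) • deriv (deriv u) (x + s)) volume 0 h :=
        hcont2.intervalIntegrable 0 h
      have eq2 : (∫ s in (0:ℝ)..h,
            ((h - s) • deriv (deriv u) (x + s) - deriv u (x + s)))
          = - (h • deriv u x) := by
        have := intervalIntegral.integral_eq_sub_of_hasDerivAt
          (f := fun s => (h - s) • deriv u (x + s))
          (fun s _ => hF s) (hII2.sub hII1)
        simpa using this
      rw [intervalIntegral.integral_sub hII2 hII1, eq1] at eq2
      have eq4 : h • deriv u x = (u (x + h) - u x) -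
          ∫ s in (0:ℝ)..h, (h - s) • deriv (deriv u) (x + s) := by
        linear_combination (norm := module) eq2
      have hnorm : ‖h • deriv u x‖ = h * ‖deriv u x‖ := by
        rw [norm_smul, Real.norm_of_nonneg hh0]
      calc h * ‖deriv u x‖ = ‖h • deriv u x‖ := hnorm.symm
        _ ≤ ‖u (x + h) - u x‖ + ‖∫ s in (0:ℝ)..h, (h - s) • deriv (deriv u) (x + s)‖ := by
            rw [eq4]; exact norm_sub_le _ _
        _ ≤ (‖u (x + h)‖ + ‖u x‖) +
            ∫ s in (0:ℝ)..h, ‖(h - s) • deriv (deriv u) (x + s)‖ := by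
            gcongr
            · exact norm_sub_le _ _
            · exact intervalIntegral.norm_integral_le_integral_norm hh0
        _ = ‖u (x + h)‖ + ‖u x‖ +
            ∫ s in (0:ℝ)..h, |h - s| * ‖deriv (deriv u) (x + s)‖ := by
            congr 1
            apply intervalIntegral.integral_congr
            intro s _
            show ‖(h - s) • deriv (deriv u) (x + s)‖ = |h - s| * ‖deriv (deriv u) (x + s)‖
            rw [norm_smul, Real.norm_eq_abs]
    -- Fubini setup
    set P : ℝ × ℝ → ℝ := fun p => |h - p.2| * ‖deriv (deriv u) (p.1 + p.2)‖ with hP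
    set ν : Measure ℝ := volume.restrict (Set.Ioc 0 h) with hν
    have hPc : Continuous P :=
      (continuous_const.sub continuous_snd).abs.mul
        ((hc2.comp (continuous_fst.add continuous_snd)).norm)
    have hPnn : ∀ p, 0 ≤ P p := fun p => mul_nonneg (abs_nonneg _) (norm_nonneg _)
    have hsecint : ∀ s : ℝ, Integrable (fun x => P (x, s)) volume := by
      intro s
      simpa [hP] using ((hi''.norm.comp_add_right s).const_mul |h - s|)
    have hxint : ∀ s : ℝ, (∫ x : ℝ, P (x, s)) = |h - s| * B := by
      intro s
      simp only [hP]
      rw [integral_const_mul]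
      congr 1
      exact integral_add_right_eq_self (fun y => ‖deriv (deriv u) y‖) s
    have hPint : Integrable P (volume.prod ν) := by
      rw [integrable_prod_iff' (hPc.aestronglyMeasurable)]
      constructor
      · exact Filter.Eventually.of_forall fun s => hsecint s
      · have heq : (fun s => ∫ x : ℝ, ‖P (x, s)‖) = fun s => |h - s| * B := by
          funext s
          rw [← hxint s]
          congr 1; funext x; exact Real.norm_of_nonneg (hPnn _)
        rw [heq, hν]
        exact ((by fun_prop : Continuous fun s : ℝ => |h - s| * B).integrableOn_Icc).mono_set
          Set.Ioc_subset_Icc_self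
    have hGint : Integrable (fun x => ∫ s, P (x, s) ∂ν) volume :=
      hPint.integral_prod_left
    have hGrw : ∀ x : ℝ, (∫ s in (0:ℝ)..h, |h - s| * ‖deriv (deriv u) (x + s)‖)
        = ∫ s, P (x, s) ∂ν := by
      intro x
      rw [hν, intervalIntegral.integral_of_le hh0]
    have hswap : (∫ x : ℝ, ∫ s, P (x, s) ∂ν) = h ^ 2 / 2 * B := by
      rw [integral_integral_swap hPint]
      have h1 : (∫ s, ∫ x : ℝ, P (x, s) ∂volume ∂ν) = ∫ s, |h - s| * B ∂ν := by
        congr 1; funext s; exact hxint s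
      rw [h1, hν, ← intervalIntegral.integral_of_le hh0]
      have habs : (∫ s in (0:ℝ)..h, |h - s| * B) = ∫ s in (0:ℝ)..h, (h - s) * B := by
        apply intervalIntegral.integral_congr
        intro s hs
        rw [Set.uIcc_of_le hh0] at hs
        show |h - s| * B = (h - s) * B
        rw [abs_of_nonneg (by linarith [hs.2])]
      rw [habs, intervalIntegral.integral_mul_const]
      have h2 : (∫ s in (0:ℝ)..h, (h - s)) = h ^ 2 / 2 := by
        rw [intervalIntegral.integral_sub intervalIntegrable_const
          intervalIntegral.intervalIntegrable_id]
        simp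
        ring
      rw [h2]
    -- integrate the pointwise bound
    have hRHSint : Integrable (fun x => ‖u (x + h)‖ + ‖u x‖ + ∫ s, P (x, s) ∂ν) volume :=
      ((hi.norm.comp_add_right h).add hi.norm).add hGint
    have hLHSint : Integrable (fun x => h * ‖deriv u x‖) volume := hi'.norm.const_mul h
    have hmono : (∫ x : ℝ, h * ‖deriv u x‖) ≤
        ∫ x : ℝ, (‖u (x + h)‖ + ‖u x‖ + ∫ s, P (x, s) ∂ν) := by
      apply integral_mono hLHSint hRHSint
      intro x
      have := ptwise x
      rw [hGrw x] at this
      exact this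
    rw [integral_const_mul] at hmono
    have hs1 : (∫ x : ℝ, (‖u (x + h)‖ + ‖u x‖ + ∫ s, P (x, s) ∂ν))
        = (∫ x : ℝ, (‖u (x + h)‖ + ‖u x‖)) + ∫ x : ℝ, ∫ s, P (x, s) ∂ν :=
      integral_add ((hi.norm.comp_add_right h).add hi.norm) hGint
    have hs2 : (∫ x : ℝ, (‖u (x + h)‖ + ‖u x‖))
        = (∫ x : ℝ, ‖u (x + h)‖) + ∫ x : ℝ, ‖u x‖ :=
      integral_add (hi.norm.comp_add_right h) hi.norm
    have hA1 : (∫ x : ℝ, ‖u (x + h)‖) = A := integral_add_right_eq_self (fun y => ‖u y‖) h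
    rw [hs1, hs2, hswap, hA1] at hmono
    calc h * C ≤ A + A + h ^ 2 / 2 * B := hmono
      _ = 2 * A + h ^ 2 / 2 * B := by ring
  -- optimization step
  rw [← Real.sqrt_eq_rpow, ← Real.sqrt_eq_rpow]
  rcases eq_or_lt_of_le hA0 with hA' | hA'
  · -- A = 0
    have hCle : C ≤ 0 := by
      by_contra hc
      push_neg at hc
      rcases eq_or_lt_of_le hB0 with hB' | hB'
      · have h1 := key 1 one_pos
        rw [← hA', ← hB'] at h1
        norm_num at h1
        linarith
      · have h1 := key (C / B) (div_pos hc hB')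
        rw [← hA'] at h1
        have hCB : (C / B) ^ 2 / 2 * B = C ^ 2 / (2 * B) := by
          field_simp
        have h3 : C / B * C = C ^ 2 / B := by field_simp
        rw [hCB, h3] at h1
        have h2 : C ^ 2 / (2 * B) < C ^ 2 / B := by
          apply div_lt_div_of_pos_left (by positivity) hB' (by linarith)
        linarith
    calc C ≤ 0 := hCle
      _ ≤ _ := by positivity
  · rcases eq_or_lt_of_le hB0 with hB' | hB'
    · -- B = 0
      have hCle : C ≤ 0 := by
        by_contra hc
        push_neg at hc
        have h1 := key ((2 * A + 1) / C) (div_pos (by linarith) hc)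
        rw [← hB'] at h1
        rw [div_mul_cancel₀ _ (ne_of_gt hc)] at h1
        linarith
      calc C ≤ 0 := hCle
        _ ≤ _ := by positivity
    · -- A, B > 0
      set sa := Real.sqrt A with hsa
      set sb := Real.sqrt B with hsb
      have hsa0 : 0 < sa := Real.sqrt_pos.mpr hA'
      have hsb0 : 0 < sb := Real.sqrt_pos.mpr hB'
      have hsa2 : sa ^ 2 = A := Real.sq_sqrt hA0
      have hsb2 : sb ^ 2 = B := Real.sq_sqrt hB0
      have hh : (0:ℝ) < 2 * sa / sb := by positivity
      have h1 := key (2 * sa / sb) hh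
      have heq : 2 * A + (2 * sa / sb) ^ 2 / 2 * B = (2 * sa / sb) * (2 * sa * sb) := by
        rw [← hsa2, ← hsb2]
        field_simp
        ring
      rw [heq] at h1
      have hfin : C ≤ 2 * sa * sb := le_of_mul_le_mul_left (by linarith [h1]) hh
      linarith
end

section
/- Let u : ℝ → ℂ be twice continuously differentiable and periodic with period 1. Then ∫_0^1 |u′(x)| dx ≤ 2 · (∫_0^1 |u(x)| dx)^{1/2} · (∫_0^1 |u″(x)| dx)^{1/2}. -/
open MeasureTheory intervalIntegral Set Function

theorem stmt_10 (u : ℝ → ℂ) (hu : ContDiff ℝ 2 u)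
    (hper : ∀ x : ℝ, u (x + 1) = u x) :
    (∫ x in (0 : ℝ)..1, ‖deriv u x‖) ≤
      2 * (∫ x in (0 : ℝ)..1, ‖u x‖) ^ ((1 : ℝ) / 2) *
        (∫ x in (0 : ℝ)..1, ‖deriv (deriv u) x‖) ^ ((1 : ℝ) / 2) := by
  have hd1 : Differentiable ℝ u := hu.differentiable two_ne_zero
  have hdd : ContDiff ℝ 1 (deriv u) :=
    ((contDiff_succ_iff_deriv (n := 1)).mp (by exact_mod_cast hu)).2.2
  have hd2 : Differentiable ℝ (deriv u) := hdd.differentiable one_ne_zero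
  have hc0 : Continuous u := hu.continuous
  have hc1 : Continuous (deriv u) := hd2.continuous
  have hc2 : Continuous (deriv (deriv u)) :=
    (((contDiff_succ_iff_deriv (n := 0)).mp (by exact_mod_cast hdd)).2.2).continuous
  -- periodicity of derivatives
  have pu : Periodic u 1 := hper
  have pstep : ∀ (f : ℝ → ℂ), Periodic f 1 → Periodic (deriv f) 1 := by
    intro f hf x
    have hfe : (fun y => f (y + 1)) = f := funext hf
    calc deriv f (x + 1) = deriv (fun y => f (y + 1)) x := (deriv_comp_add_const f 1 x).symm
      _ = deriv f x := by rw [hfe]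
  have pu1 : Periodic (deriv u) 1 := pstep u pu
  have pu2 : Periodic (deriv (deriv u)) 1 := pstep (deriv u) pu1
  set A : ℝ := ∫ x in (0 : ℝ)..1, ‖u x‖ with hAdef
  set B : ℝ := ∫ x in (0 : ℝ)..1, ‖deriv (deriv u) x‖ with hBdef
  set M : ℝ := ∫ x in (0 : ℝ)..1, ‖deriv u x‖ with hMdef
  have hA : 0 ≤ A := intervalIntegral.integral_nonneg zero_le_one (fun x _ => norm_nonneg _)
  have hB : 0 ≤ B := intervalIntegral.integral_nonneg zero_le_one (fun x _ => norm_nonneg _)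
  have hM : 0 ≤ M := intervalIntegral.integral_nonneg zero_le_one (fun x _ => norm_nonneg _)
  -- shift invariance of period integrals of norms
  have shift : ∀ (f : ℝ → ℂ), Periodic f 1 → Continuous f → ∀ t : ℝ,
      (∫ x in (0:ℝ)..1, ‖f (x + t)‖) = ∫ x in (0:ℝ)..1, ‖f x‖ := by
    intro f hf hcf t
    have pn : Periodic (fun x => ‖f x‖) 1 := fun x => by simp [hf x]
    rw [intervalIntegral.integral_comp_add_right (fun x => ‖f x‖) t]
    have := pn.intervalIntegral_add_eq t 0
    simpa [add_comm] using this
  -- the key inequality : ∀ h > 0, h * M ≤ 2 * A + h ^ 2 * B / 2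
  have key : ∀ h : ℝ, 0 < h → h * M ≤ 2 * A + h ^ 2 * B / 2 := by
    intro h hh
    -- Taylor with integral remainder
    have tay : ∀ x : ℝ, (∫ t in (0:ℝ)..h, (h - t) • deriv (deriv u) (x + t))
        = u (x + h) - u x - h • deriv u x := by
      intro x
      have FTC := intervalIntegral.integral_eq_sub_of_hasDerivAt
        (f := fun t => u (x + t) + (h - t) • deriv u (x + t))
        (f' := fun t => (h - t) • deriv (deriv u) (x + t)) (a := 0) (b := h)
        (fun t _ => by
          have h1 : HasDerivAt (fun t => u (x + t)) (deriv u (x + t)) t :=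
            ((hd1 (x + t)).hasDerivAt).comp_const_add x t
          have h2 : HasDerivAt (fun t => deriv u (x + t)) (deriv (deriv u) (x + t)) t :=
            ((hd2 (x + t)).hasDerivAt).comp_const_add x t
          have h3 : HasDerivAt (fun t : ℝ => (h - t)) (-1 : ℝ) t := by
            simpa using (hasDerivAt_id t).const_sub h
          have h5 := h1.add (h3.smul h2)
          refine h5.congr_deriv ?_
          module)
        ((Continuous.intervalIntegrable
          (by fun_prop : Continuous fun t => (h - t) • deriv (deriv u) (x + t))) 0 h)
      rw [FTC]
      simp
      module
    -- pointwise bound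
    have ptwise : ∀ x : ℝ, h * ‖deriv u x‖ ≤
        ‖u (x + h)‖ + ‖u x‖ + ∫ t in (0:ℝ)..h, (h - t) * ‖deriv (deriv u) (x + t)‖ := by
      intro x
      have e1 : h * ‖deriv u x‖ = ‖h • deriv u x‖ := by
        rw [norm_smul, Real.norm_of_nonneg hh.le]
      have e2 : h • deriv u x
          = u (x + h) - u x - ∫ t in (0:ℝ)..h, (h - t) • deriv (deriv u) (x + t) := by
        rw [tay x]; abel
      have e3 : ‖∫ t in (0:ℝ)..h, (h - t) • deriv (deriv u) (x + t)‖
          ≤ ∫ t in (0:ℝ)..h, (h - t) * ‖deriv (deriv u) (x + t)‖ := by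
        refine le_trans (intervalIntegral.norm_integral_le_integral_norm hh.le) ?_
        refine le_of_eq (intervalIntegral.integral_congr (fun t ht => ?_))
        rw [Set.uIcc_of_le hh.le] at ht
        rw [norm_smul, Real.norm_of_nonneg (by linarith [ht.2])]
      calc h * ‖deriv u x‖ = ‖_‖ := by rw [e1, e2]
        _ ≤ ‖u (x + h)‖ + ‖u x‖ + ‖∫ t in (0:ℝ)..h, (h - t) • deriv (deriv u) (x + t)‖ := by
            refine le_trans (norm_sub_le _ _) ?_
            have := norm_sub_le (u (x + h)) (u x)
            linarith
        _ ≤ _ := by linarith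
    -- continuity of the parametric integral
    have hGcont : Continuous (fun x => ∫ t in (0:ℝ)..h, (h - t) * ‖deriv (deriv u) (x + t)‖) := by
      apply intervalIntegral.continuous_parametric_intervalIntegral_of_continuous'
      show Continuous fun p : ℝ × ℝ => (h - p.2) * ‖deriv (deriv u) (p.1 + p.2)‖
      fun_prop
    -- integrate the pointwise bound over a period
    have step1 : h * M ≤ ∫ x in (0:ℝ)..1,
        (‖u (x + h)‖ + ‖u x‖ + ∫ t in (0:ℝ)..h, (h - t) * ‖deriv (deriv u) (x + t)‖) := by
      rw [hMdef, ← intervalIntegral.integral_const_mul]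
      refine intervalIntegral.integral_mono_on zero_le_one ?_ ?_ (fun x _ => ptwise x)
      · exact (Continuous.intervalIntegrable (by fun_prop)) 0 1
      · exact (Continuous.intervalIntegrable (by fun_prop)) 0 1
    have split : (∫ x in (0:ℝ)..1,
        (‖u (x + h)‖ + ‖u x‖ + ∫ t in (0:ℝ)..h, (h - t) * ‖deriv (deriv u) (x + t)‖))
        = (∫ x in (0:ℝ)..1, ‖u (x + h)‖) + A
          + ∫ x in (0:ℝ)..1, (∫ t in (0:ℝ)..h, (h - t) * ‖deriv (deriv u) (x + t)‖) := by
      rw [intervalIntegral.integral_add, intervalIntegral.integral_add]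
      · exact (Continuous.intervalIntegrable (by fun_prop)) 0 1
      · exact (Continuous.intervalIntegrable (by fun_prop)) 0 1
      · exact (Continuous.intervalIntegrable (by fun_prop)) 0 1
      · exact (hGcont.intervalIntegrable) 0 1
    have shiftA : (∫ x in (0:ℝ)..1, ‖u (x + h)‖) = A := shift u pu hc0 h
    -- Fubini for the remainder term
    have fub : (∫ x in (0:ℝ)..1, (∫ t in (0:ℝ)..h, (h - t) * ‖deriv (deriv u) (x + t)‖))
        = h ^ 2 * B / 2 := by
      have Fcont : Continuous fun p : ℝ × ℝ => (h - p.2) * ‖deriv (deriv u) (p.1 + p.2)‖ := by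
        fun_prop
      have hInt : Integrable (uncurry fun x t => (h - t) * ‖deriv (deriv u) (x + t)‖)
          ((volume.restrict (Ioc (0:ℝ) 1)).prod (volume.restrict (Ioc (0:ℝ) h))) := by
        rw [Measure.prod_restrict]
        have hcpt : IntegrableOn (fun p : ℝ × ℝ => (h - p.2) * ‖deriv (deriv u) (p.1 + p.2)‖)
            (Icc (0:ℝ) 1 ×ˢ Icc (0:ℝ) h) (volume.prod volume) :=
          (Fcont.continuousOn).integrableOn_compact (isCompact_Icc.prod isCompact_Icc)
        exact hcpt.mono_set (Set.prod_mono Set.Ioc_subset_Icc_self Set.Ioc_subset_Icc_self)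
      have swap := MeasureTheory.integral_integral_swap hInt
      calc (∫ x in (0:ℝ)..1, (∫ t in (0:ℝ)..h, (h - t) * ‖deriv (deriv u) (x + t)‖))
          = ∫ x in Ioc (0:ℝ) 1, (∫ t in Ioc (0:ℝ) h, (h - t) * ‖deriv (deriv u) (x + t)‖) := by
            rw [intervalIntegral.integral_of_le zero_le_one]
            refine setIntegral_congr_fun measurableSet_Ioc (fun x _ => ?_)
            rw [intervalIntegral.integral_of_le hh.le]
        _ = ∫ t in Ioc (0:ℝ) h, (∫ x in Ioc (0:ℝ) 1, (h - t) * ‖deriv (deriv u) (x + t)‖) := swap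
        _ = ∫ t in Ioc (0:ℝ) h, (h - t) * B := by
            refine setIntegral_congr_fun measurableSet_Ioc (fun t _ => ?_)
            rw [MeasureTheory.integral_const_mul]
            congr 1
            rw [← intervalIntegral.integral_of_le zero_le_one]
            exact shift (deriv (deriv u)) pu2 hc2 t
        _ = ∫ t in (0:ℝ)..h, (h - t) * B := by
            rw [intervalIntegral.integral_of_le hh.le]
        _ = h ^ 2 * B / 2 := by
            rw [intervalIntegral.integral_mul_const]
            rw [intervalIntegral.integral_sub intervalIntegrable_const
              (intervalIntegral.intervalIntegrable_id)]
            simp [integral_id]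
            ring
    rw [split, shiftA] at step1
    rw [fub] at step1
    linarith
  -- conclude via the discriminant
  have quad : ∀ x : ℝ, 0 ≤ (B / 2) * (x * x) + (-M) * x + 2 * A := by
    intro x
    rcases le_or_gt x 0 with hx | hx
    · nlinarith
    · have := key x hx
      nlinarith
  have disc := discrim_le_zero quad
  rw [discrim] at disc
  have hM2 : M ^ 2 ≤ 4 * A * B := by nlinarith
  have hsq : M ≤ 2 * Real.sqrt A * Real.sqrt B := by
    have h1 : M ≤ Real.sqrt (4 * A * B) := by
      rw [← Real.sqrt_sq hM]; exact Real.sqrt_le_sqrt hM2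
    have h2 : Real.sqrt (4 * A * B) = 2 * Real.sqrt A * Real.sqrt B := by
      rw [show (4:ℝ) * A * B = (2 * Real.sqrt A * Real.sqrt B) ^ 2 by
        nlinarith [Real.sq_sqrt hA, Real.sq_sqrt hB]]
      exact Real.sqrt_sq (by positivity)
    linarith
  calc M ≤ 2 * Real.sqrt A * Real.sqrt B := hsq
    _ = 2 * A ^ ((1:ℝ)/2) * B ^ ((1:ℝ)/2) := by
        rw [Real.sqrt_eq_rpow, Real.sqrt_eq_rpow]
end

section
/- Let k ≥ 2 be an integer and let u : ℝ → ℂ be k times continuously differentiable and periodic with period 1. Then for every integer l with 0 ≤ l ≤ k, ∫_0^1 |u^{(l)}(x)| dx ≤ 2^{3·2^{k-2}-2} · (∫_0^1 |u(x)| dx)^{1 - l/k} · (∫_0^1 |u^{(k)}(x)| dx)^{l/k}. -/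
lemma two_mul_add_one_le (k : ℕ) : 2 * k + 1 ≤ 3 * 2 ^ k := by
  induction k with
  | zero => norm_num
  | succ n ih =>
    have : 1 ≤ 2 ^ n := Nat.one_le_two_pow
    calc 2 * (n + 1) + 1 = (2 * n + 1) + 2 := by ring
    _ ≤ 3 * 2 ^ n + 2 := by omega
    _ ≤ 3 * 2 ^ (n + 1) := by rw [pow_succ]; omega

lemma sq_add_eight_le (k : ℕ) (hk : 2 ≤ k) : k * k + 8 ≤ 3 * 2 ^ k := by
  induction k with
  | zero => omega
  | succ n ih =>
    rcases Nat.lt_or_ge n 2 with h | h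
    · interval_cases n <;> simp_all
    · have h1 := ih h
      have h2 := two_mul_add_one_le n
      calc (n+1) * (n+1) + 8 = (n * n + 8) + (2 * n + 1) := by ring
      _ ≤ 3 * 2 ^ n + 3 * 2 ^ n := by omega
      _ = 3 * 2 ^ (n+1) := by rw [pow_succ]; ring

lemma exp_bound (k l : ℕ) (hk : 2 ≤ k) (hl : l ≤ k) : l * (k - l) ≤ 3 * 2 ^ (k - 2) - 2 := by
  have hA : 4 * (l * (k - l)) ≤ k * k := by
    obtain ⟨m, rfl⟩ : ∃ m, k = l + m := ⟨k - l, by omega⟩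
    have hm : l + m - l = m := by omega
    rw [hm]
    rcases le_total l m with h | h
    · obtain ⟨d, rfl⟩ : ∃ d, m = l + d := ⟨m - l, by omega⟩
      nlinarith
    · obtain ⟨d, rfl⟩ : ∃ d, l = m + d := ⟨l - m, by omega⟩
      nlinarith
  have hB := sq_add_eight_le k hk
  have hC : 2 ^ k = 4 * 2 ^ (k - 2) := by
    obtain ⟨m, rfl⟩ : ∃ m, k = m + 2 := ⟨k - 2, by omega⟩
    simp [pow_succ]
    ring
  rw [hC] at hB
  omega


lemma chain_pow (a : ℕ → ℝ) (ha : ∀ i, 0 ≤ a i) :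
    ∀ k : ℕ, (∀ i, i + 2 ≤ k → a (i + 1) ^ 2 ≤ 4 * (a i * a (i + 2))) →
      ∀ j m, j + m = k → a j ^ k ≤ 2 ^ (k * j * m) * (a 0 ^ m * a k ^ j) := by
  intro k
  induction k with
  | zero =>
    intro _ j m hjm
    obtain ⟨rfl, rfl⟩ : j = 0 ∧ m = 0 := by omega
    simp
  | succ k ih =>
    intro hyp j m hjm
    rcases Nat.eq_zero_or_pos m with rfl | hm
    · obtain rfl : j = k + 1 := by omega
      simp
    obtain ⟨m', rfl⟩ : ∃ m', m = m' + 1 := ⟨m - 1, by omega⟩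
    have hjk : j + m' = k := by omega
    rcases Nat.eq_zero_or_pos k with rfl | hk
    · obtain ⟨rfl, rfl⟩ : j = 0 ∧ m' = 0 := by omega
      simp
    obtain ⟨n, rfl⟩ : ∃ n, k = n + 1 := ⟨k - 1, by omega⟩
    -- IH with restricted hypothesis
    have IH := ih (fun i hi => hyp i (by omega))
    -- key : a (n+1) ^ (n+2) ≤ 2 ^ ((n+1)*(n+2)) * (a 0 * a (n+2) ^ (n+1))
    have key : a (n+1) ^ (n + 2) ≤ 2 ^ ((n+1) * (n+2)) * (a 0 * a (n+2) ^ (n+1)) := by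
      have hk2 : a (n+1) ^ 2 ≤ 4 * (a n * a (n+2)) := hyp n (by omega)
      have hk1 : a n ^ (n+1) ≤ 2 ^ ((n+1) * n * 1) * (a 0 ^ 1 * a (n+1) ^ n) :=
        IH n 1 (by omega)
      have h2 : a (n+1) ^ (n + 2) * a (n+1) ^ n ≤
          (2 ^ ((n+1) * (n+2)) * (a 0 * a (n+2) ^ (n+1))) * a (n+1) ^ n := by
        have c1 : a (n+1) ^ (n+2) * a (n+1) ^ n = (a (n+1) ^ 2) ^ (n+1) := by
          rw [← pow_add, ← pow_mul]; ring_nf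
        calc a (n+1) ^ (n+2) * a (n+1) ^ n = (a (n+1) ^ 2) ^ (n+1) := c1
          _ ≤ (4 * (a n * a (n+2))) ^ (n+1) := by
              exact pow_le_pow_left₀ (sq_nonneg _) hk2 _
          _ = 4 ^ (n+1) * (a n ^ (n+1) * a (n+2) ^ (n+1)) := by
              rw [mul_pow, mul_pow]
          _ ≤ 4 ^ (n+1) * ((2 ^ ((n+1) * n * 1) * (a 0 ^ 1 * a (n+1) ^ n)) * a (n+2) ^ (n+1)) := by
              have h4 : (0:ℝ) ≤ 4 ^ (n+1) := by positivity
              have h5 : (0:ℝ) ≤ a (n+2) ^ (n+1) := pow_nonneg (ha _) _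
              exact mul_le_mul_of_nonneg_left (mul_le_mul_of_nonneg_right hk1 h5) h4
          _ = (2 ^ ((n+1) * (n+2)) * (a 0 * a (n+2) ^ (n+1))) * a (n+1) ^ n := by
              rw [show (4:ℝ) = 2 ^ 2 by norm_num, ← pow_mul, pow_one,
                show (n+1) * (n+2) = 2 * (n+1) + (n+1) * n * 1 by ring, pow_add]
              ring
      rcases eq_or_lt_of_le (ha (n+1)) with h0 | h0
      · have : a (n+1) ^ (n+2) = 0 := by rw [← h0]; simp
        rw [this]
        have := ha 0; have := ha (n+2); positivity
      · exact le_of_mul_le_mul_right h2 (pow_pos h0 n)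
    -- main step
    have hjm' : a j ^ (n+1) ≤ 2 ^ ((n+1) * j * m') * (a 0 ^ m' * a (n+1) ^ j) :=
      IH j m' hjk
    have main : (a j ^ (n + 2)) ^ (n+1) ≤
        (2 ^ ((n+2) * j * (m' + 1)) * (a 0 ^ (m' + 1) * a (n+2) ^ j)) ^ (n+1) := by
      calc (a j ^ (n+2)) ^ (n+1) = (a j ^ (n+1)) ^ (n+2) := by
            rw [← pow_mul, ← pow_mul]; ring_nf
        _ ≤ (2 ^ ((n+1) * j * m') * (a 0 ^ m' * a (n+1) ^ j)) ^ (n+2) := by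
            exact pow_le_pow_left₀ (pow_nonneg (ha _) _) hjm' _
        _ = 2 ^ ((n+1) * j * m' * (n+2)) * (a 0 ^ (m' * (n+2)) * (a (n+1) ^ (n+2)) ^ j) := by
            rw [mul_pow, mul_pow, ← pow_mul, ← pow_mul, ← pow_mul, ← pow_mul]
            ring_nf
        _ ≤ 2 ^ ((n+1) * j * m' * (n+2)) *
              (a 0 ^ (m' * (n+2)) * (2 ^ ((n+1) * (n+2)) * (a 0 * a (n+2) ^ (n+1))) ^ j) := by
            have hb : (0:ℝ) ≤ a (n+1) ^ (n+2) := pow_nonneg (ha _) _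
            have := pow_le_pow_left₀ hb key j
            have h2 : (0:ℝ) ≤ 2 ^ ((n+1) * j * m' * (n+2)) := by positivity
            have h0 : (0:ℝ) ≤ a 0 ^ (m' * (n+2)) := pow_nonneg (ha _) _
            exact mul_le_mul_of_nonneg_left (mul_le_mul_of_nonneg_left this h0) h2
        _ = (2 ^ ((n+2) * j * (m' + 1)) * (a 0 ^ (m' + 1) * a (n+2) ^ j)) ^ (n+1) := by
            rw [show n + 2 = j + m' + 1 by omega, show n + 1 = j + m' by omega]
            ring
    have hr : (0:ℝ) ≤ 2 ^ ((n+2) * j * (m' + 1)) * (a 0 ^ (m' + 1) * a (n+2) ^ j) := by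
      have := ha 0; have := ha (n+2); positivity
    exact le_of_pow_le_pow_left₀ (Nat.succ_ne_zero n) hr main


open intervalIntegral

lemma base_ineq (v : ℝ → ℂ) (hd1 : Differentiable ℝ v)
    (hd2 : Differentiable ℝ (deriv v)) (hc2 : Continuous (deriv (deriv v)))
    (hper : ∀ x, v (x + 1) = v x)
    (hper2 : ∀ x, deriv (deriv v) (x + 1) = deriv (deriv v) x) :
    (∫ x in (0:ℝ)..1, ‖deriv v x‖) ^ 2 ≤
      4 * ((∫ x in (0:ℝ)..1, ‖v x‖) * (∫ x in (0:ℝ)..1, ‖deriv (deriv v) x‖)) := by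
  have hcv : Continuous v := hd1.continuous
  have hcv1 : Continuous (deriv v) := hd2.continuous
  set g : ℝ → ℝ := fun t => ‖deriv (deriv v) t‖ with hgdef
  have hgc : Continuous g := hc2.norm
  have hgnn : ∀ t, 0 ≤ g t := fun t => norm_nonneg _
  have hgper : ∀ t, g (t + 1) = g t := fun t => by simp only [hgdef, hper2 t]
  set G : ℝ → ℝ := fun x => ∫ t in (0:ℝ)..x, g t with hGdef
  have hGd : Differentiable ℝ G := fun x =>
    ((hgc.integral_hasStrictDerivAt 0 x).hasDerivAt).differentiableAt
  have hGc : Continuous G := hGd.continuous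
  set H : ℝ → ℝ := fun x => ∫ t in (0:ℝ)..x, G t with hHdef
  have hHd : Differentiable ℝ H := fun x =>
    ((hGc.integral_hasStrictDerivAt 0 x).hasDerivAt).differentiableAt
  have hHc : Continuous H := hHd.continuous
  set A : ℝ := ∫ x in (0:ℝ)..1, ‖v x‖ with hAdef
  set B : ℝ := ∫ x in (0:ℝ)..1, g x with hBdef
  set X : ℝ := ∫ x in (0:ℝ)..1, ‖deriv v x‖ with hXdef
  have hXnn : 0 ≤ X := intervalIntegral.integral_nonneg (by norm_num) (fun t _ => norm_nonneg _)
  have hAnn : 0 ≤ A := intervalIntegral.integral_nonneg (by norm_num) (fun t _ => norm_nonneg _)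
  have hBnn : 0 ≤ B := intervalIntegral.integral_nonneg (by norm_num) (fun t _ => hgnn t)
  -- G of shift
  have hGshift : ∀ s : ℝ, G (s + 1) = G s + B := by
    intro s
    have h1 : G (s + 1) = (∫ t in (0:ℝ)..1, g t) + ∫ t in (1:ℝ)..s+1, g t := by
      rw [hGdef]
      exact (integral_add_adjacent_intervals (hgc.intervalIntegrable _ _)
        (hgc.intervalIntegrable _ _)).symm
    have h2 : (∫ t in (1:ℝ)..s+1, g t) = ∫ t in (0:ℝ)..s, g (t + 1) := by
      rw [integral_comp_add_right (fun t => g t) 1]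
      norm_num
    have h3 : (∫ t in (0:ℝ)..s, g (t + 1)) = G s := by
      simp only [hgper]; rfl
    rw [h1, h2, h3]; ring
  -- H of shift
  have hHshift : ∀ s : ℝ, H (s + 1) = H 1 + H s + B * s := by
    intro s
    have h1 : H (s + 1) = (∫ t in (0:ℝ)..1, G t) + ∫ t in (1:ℝ)..s+1, G t := by
      rw [hHdef]
      exact (integral_add_adjacent_intervals (hGc.intervalIntegrable _ _)
        (hGc.intervalIntegrable _ _)).symm
    have h2 : (∫ t in (1:ℝ)..s+1, G t) = ∫ t in (0:ℝ)..s, G (t + 1) := by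
      rw [integral_comp_add_right (fun t => G t) 1]
      norm_num
    have h3 : (∫ t in (0:ℝ)..s, G (t + 1)) = H s + B * s := by
      have : (fun t => G (t + 1)) = fun t => G t + B := funext hGshift
      calc (∫ t in (0:ℝ)..s, G (t + 1)) = ∫ t in (0:ℝ)..s, (G t + B) := by rw [this]
        _ = (∫ t in (0:ℝ)..s, G t) + ∫ t in (0:ℝ)..s, (B:ℝ) :=
            integral_add (hGc.intervalIntegrable _ _) (continuous_const.intervalIntegrable _ _)
        _ = H s + B * s := by rw [integral_const]; simp [mul_comm]; rfl
    rw [h1, h2, h3]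
    simp only [hHdef]
    ring
  -- key inequality for every h > 0
  have key : ∀ h : ℝ, 0 < h → h * X ≤ 2 * A + B * h ^ 2 / 2 := by
    intro h hh
    -- pointwise bound
    have ptwise : ∀ x : ℝ, h * ‖deriv v x‖ ≤
        ‖v (x + h)‖ + ‖v x‖ + (H (x + h) - H x - h * G x) := by
      intro x
      have e1 : (∫ t in x..x+h, deriv v t) = v (x + h) - v x :=
        integral_deriv_eq_sub (fun t _ => hd1 t) (hcv1.intervalIntegrable _ _)
      have e3 : (∫ _ in x..x+h, deriv v x) = h • deriv v x := by
        rw [integral_const]; norm_num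
      have e4 : (∫ t in x..x+h, (deriv v t - deriv v x)) = (v (x+h) - v x) - h • deriv v x := by
        rw [integral_sub (hcv1.intervalIntegrable _ _) (continuous_const.intervalIntegrable _ _),
          e1, e3]
      have bound : ∀ t ∈ Set.Icc x (x+h), ‖deriv v t - deriv v x‖ ≤ G t - G x := by
        intro t ht
        have e5 : deriv v t - deriv v x = ∫ s in x..t, deriv (deriv v) s := by
          rw [integral_deriv_eq_sub (fun s _ => hd2 s) (hc2.intervalIntegrable _ _)]
        have e6 : (∫ s in x..t, g s) = G t - G x := by
          simp only [hGdef]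
          exact (integral_interval_sub_left (hgc.intervalIntegrable _ _)
            (hgc.intervalIntegrable _ _)).symm
        rw [e5, ← e6]
        exact intervalIntegral.norm_integral_le_integral_norm ht.1
      have e7 : (∫ t in x..x+h, (G t - G x)) = H (x+h) - H x - h * G x := by
        rw [integral_sub (hGc.intervalIntegrable _ _) (continuous_const.intervalIntegrable _ _),
          integral_const]
        have : (∫ t in x..x+h, G t) = H (x+h) - H x := by
          simp only [hHdef]
          exact (integral_interval_sub_left (hGc.intervalIntegrable _ _)
            (hGc.intervalIntegrable _ _)).symm
        rw [this]
        simp only [smul_eq_mul]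
        ring
      have n1 : h * ‖deriv v x‖ = ‖h • deriv v x‖ := by
        rw [norm_smul]; simp [abs_of_pos hh]
      have n2 : ‖h • deriv v x‖ ≤ ‖v (x+h)‖ + ‖v x‖ +
          ‖∫ t in x..x+h, (deriv v t - deriv v x)‖ := by
        have : h • deriv v x = (v (x+h) - v x) - ∫ t in x..x+h, (deriv v t - deriv v x) := by
          rw [e4]; ring
        rw [this]
        calc ‖(v (x+h) - v x) - ∫ t in x..x+h, (deriv v t - deriv v x)‖
            ≤ ‖v (x+h) - v x‖ + ‖∫ t in x..x+h, (deriv v t - deriv v x)‖ := norm_sub_le _ _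
          _ ≤ ‖v (x+h)‖ + ‖v x‖ + ‖∫ t in x..x+h, (deriv v t - deriv v x)‖ := by
              have := norm_sub_le (v (x+h)) (v x); linarith
      have n3 : ‖∫ t in x..x+h, (deriv v t - deriv v x)‖ ≤ H (x+h) - H x - h * G x := by
        rw [← e7]
        calc ‖∫ t in x..x+h, (deriv v t - deriv v x)‖
            ≤ ∫ t in x..x+h, ‖deriv v t - deriv v x‖ :=
              intervalIntegral.norm_integral_le_integral_norm (by linarith)
          _ ≤ ∫ t in x..x+h, (G t - G x) := by
              apply integral_mono_on (by linarith)
                ((hcv1.sub continuous_const).norm.intervalIntegrable _ _)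
                ((hGc.sub continuous_const).intervalIntegrable _ _)
              exact bound
      linarith [n1, n2, n3]
    -- integrate over [0,1]
    have c1 : Continuous fun x : ℝ => h * ‖deriv v x‖ := continuous_const.mul hcv1.norm
    have c2 : Continuous fun x : ℝ => ‖v (x + h)‖ + ‖v x‖ + (H (x + h) - H x - h * G x) := by
      have cA : Continuous fun x : ℝ => v (x + h) := hcv.comp (continuous_add_right h)
      have cH : Continuous fun x : ℝ => H (x + h) := hHc.comp (continuous_add_right h)
      exact ((cA.norm.add hcv.norm).add ((cH.sub hHc).sub (continuous_const.mul hGc)))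
    have imono : (∫ x in (0:ℝ)..1, h * ‖deriv v x‖) ≤
        ∫ x in (0:ℝ)..1, (‖v (x + h)‖ + ‖v x‖ + (H (x + h) - H x - h * G x)) := by
      apply integral_mono_on (by norm_num) (c1.intervalIntegrable _ _) (c2.intervalIntegrable _ _)
      exact fun x _ => ptwise x
    have lhs_eq : (∫ x in (0:ℝ)..1, h * ‖deriv v x‖) = h * X := by
      rw [hXdef, ← integral_const_mul]
    -- compute RHS
    have pv : Function.Periodic (fun x : ℝ => ‖v x‖) 1 := fun x => by simp [hper x]
    have T1 : (∫ x in (0:ℝ)..1, ‖v (x + h)‖) = A := by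
      rw [integral_comp_add_right (fun x => ‖v x‖) h]
      have := pv.intervalIntegral_add_eq h 0
      simpa [add_comm] using this
    have T3a : (∫ x in (0:ℝ)..1, H (x + h)) - (∫ x in (0:ℝ)..1, H x)
        = ∫ x in (0:ℝ)..h, (H (x + 1) - H x) := by
      rw [integral_comp_add_right (fun x => H x) h]
      have s1 : (∫ x in (0:ℝ)+h..(1:ℝ)+h, H x) = (∫ x in (0:ℝ)+h..(1:ℝ), H x) + ∫ x in (1:ℝ)..(1:ℝ)+h, H x :=
        (integral_add_adjacent_intervals (hHc.intervalIntegrable _ _)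
          (hHc.intervalIntegrable _ _)).symm
      have s2 : (∫ x in (0:ℝ)..1, H x) = (∫ x in (0:ℝ)..(0:ℝ)+h, H x) + ∫ x in (0:ℝ)+h..(1:ℝ), H x :=
        (integral_add_adjacent_intervals (hHc.intervalIntegrable _ _)
          (hHc.intervalIntegrable _ _)).symm
      have s3 : (∫ x in (1:ℝ)..(1:ℝ)+h, H x) = ∫ x in (0:ℝ)..h, H (x + 1) := by
        rw [integral_comp_add_right (fun x => H x) 1]
        norm_num [add_comm]
      have s4 : (∫ x in (0:ℝ)..(0:ℝ)+h, H x) = ∫ x in (0:ℝ)..h, H x := by norm_num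
      have cH1 : Continuous fun x : ℝ => H (x + 1) := hHc.comp (continuous_add_right 1)
      rw [s1, s2, s3, s4,
        integral_sub (cH1.intervalIntegrable _ _) (hHc.intervalIntegrable _ _)]
      ring
    have T3b : (∫ x in (0:ℝ)..h, (H (x + 1) - H x)) = H 1 * h + B * h ^ 2 / 2 := by
      have : (fun x : ℝ => H (x + 1) - H x) = fun x : ℝ => H 1 + B * x := by
        funext x; rw [hHshift x]; ring
      have cBx : Continuous fun x : ℝ => B * x := continuous_const.mul continuous_id
      rw [this, integral_add (continuous_const.intervalIntegrable _ _)
        (cBx.intervalIntegrable _ _), integral_const,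
        integral_const_mul, integral_id]
      simp only [smul_eq_mul]
      ring
    have T2 : (∫ x in (0:ℝ)..1, G x) = H 1 := rfl
    have rhs_eq : (∫ x in (0:ℝ)..1, (‖v (x + h)‖ + ‖v x‖ + (H (x + h) - H x - h * G x)))
        = 2 * A + B * h ^ 2 / 2 := by
      have cA : Continuous fun x : ℝ => v (x + h) := hcv.comp (continuous_add_right h)
      have cH : Continuous fun x : ℝ => H (x + h) := hHc.comp (continuous_add_right h)
      have cG : Continuous fun x : ℝ => h * G x := continuous_const.mul hGc
      rw [integral_add (f := fun x => ‖v (x + h)‖ + ‖v x‖) (g := fun x => H (x + h) - H x - h * G x) ((cA.norm.add hcv.norm).intervalIntegrable _ _)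
        (((cH.sub hHc).sub cG).intervalIntegrable _ _),
        integral_add (cA.norm.intervalIntegrable _ _) (hcv.norm.intervalIntegrable _ _),
        integral_sub (f := fun x => H (x + h) - H x) ((cH.sub hHc).intervalIntegrable _ _) (cG.intervalIntegrable _ _),
        integral_sub (cH.intervalIntegrable _ _) (hHc.intervalIntegrable _ _),
        integral_const_mul, T1, T2]
      have := T3a
      have heq : (∫ x in (0:ℝ)..1, H (x + h)) - (∫ x in (0:ℝ)..1, H x) = H 1 * h + B * h ^ 2 / 2 := by
        rw [T3a, T3b]
      rw [hAdef]
      linarith [heq]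
    linarith [imono, lhs_eq.symm.le, rhs_eq.le]
  -- conclude
  rcases eq_or_lt_of_le hXnn with hX0 | hXpos
  · rw [← hX0]
    nlinarith [hAnn, hBnn]
  rcases eq_or_lt_of_le hBnn with hB0 | hBpos
  · exfalso
    have hk := key ((2 * A + 1) / X) (by positivity)
    rw [← hB0] at hk
    have : (2 * A + 1) / X * X = 2 * A + 1 := by field_simp
    rw [this] at hk; norm_num at hk
  · have hk := key (X / B) (by positivity)
    have e : X / B * X = X ^ 2 / B := by ring
    rw [e] at hk
    have e2 : B * (X / B) ^ 2 / 2 = X ^ 2 / (2 * B) := by field_simp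
    rw [e2, div_le_iff₀ hBpos] at hk
    have e3 : (2 * A + X ^ 2 / (2 * B)) * B = 2 * A * B + X ^ 2 / 2 := by field_simp
    rw [e3] at hk
    nlinarith [hk]




lemma periodic_iteratedDeriv (u : ℝ → ℂ) (hper : ∀ x : ℝ, u (x + 1) = u x) (m : ℕ) :
    ∀ x : ℝ, iteratedDeriv m u (x + 1) = iteratedDeriv m u x := by
  induction m with
  | zero => simpa [iteratedDeriv_zero] using hper
  | succ n ih =>
    intro x
    rw [iteratedDeriv_succ]
    have hf : (fun y : ℝ => iteratedDeriv n u (y + 1)) = iteratedDeriv n u := funext ih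
    calc deriv (iteratedDeriv n u) (x + 1)
        = deriv (fun y : ℝ => iteratedDeriv n u (y + 1)) x := by rw [deriv_comp_add_const]
      _ = deriv (iteratedDeriv n u) x := by rw [hf]

theorem stmt_11 (k : ℕ) (hk : 2 ≤ k) (u : ℝ → ℂ) (hu : ContDiff ℝ (k : ℕ∞) u)
    (hper : ∀ x : ℝ, u (x + 1) = u x) :
    ∀ l : ℕ, l ≤ k →
      (∫ x in (0 : ℝ)..1, ‖iteratedDeriv l u x‖) ≤
        2 ^ (3 * 2 ^ (k - 2) - 2 : ℕ) *
          (∫ x in (0 : ℝ)..1, ‖u x‖) ^ (1 - (l : ℝ) / (k : ℝ)) *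
          (∫ x in (0 : ℝ)..1, ‖iteratedDeriv k u x‖) ^ ((l : ℝ) / (k : ℝ)) := by
  intro l hl
  have hk0 : k ≠ 0 := by omega
  have hkR : (0:ℝ) < (k:ℝ) := by exact_mod_cast Nat.pos_of_ne_zero hk0
  set I : ℕ → ℝ := fun j => ∫ x in (0:ℝ)..1, ‖iteratedDeriv j u x‖ with hIdef
  have hInn : ∀ j, 0 ≤ I j := fun j =>
    intervalIntegral.integral_nonneg (by norm_num) (fun t _ => norm_nonneg _)
  have hperm := periodic_iteratedDeriv u hper
  have hchain : ∀ i, i + 2 ≤ k → I (i + 1) ^ 2 ≤ 4 * (I i * I (i + 2)) := by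
    intro i hi
    have hd1 : Differentiable ℝ (iteratedDeriv i u) :=
      hu.differentiable_iteratedDeriv i (by exact_mod_cast (show i < k by omega))
    have hd2 : Differentiable ℝ (deriv (iteratedDeriv i u)) := by
      have := hu.differentiable_iteratedDeriv (i + 1) (by exact_mod_cast (show i + 1 < k by omega))
      rwa [iteratedDeriv_succ] at this
    have hc2 : Continuous (deriv (deriv (iteratedDeriv i u))) := by
      have := hu.continuous_iteratedDeriv (i + 2) (by exact_mod_cast Nat.cast_le.mpr (show i + 2 ≤ k by omega))
      rwa [show i + 2 = i + 1 + 1 from rfl, iteratedDeriv_succ, iteratedDeriv_succ] at this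
    have hp0 : ∀ x : ℝ, iteratedDeriv i u (x + 1) = iteratedDeriv i u x := hperm i
    have hp2 : ∀ x : ℝ, deriv (deriv (iteratedDeriv i u)) (x + 1)
        = deriv (deriv (iteratedDeriv i u)) x := by
      have := hperm (i + 2)
      rwa [show i + 2 = i + 1 + 1 from rfl, iteratedDeriv_succ, iteratedDeriv_succ] at this
    have hb := base_ineq (iteratedDeriv i u) hd1 hd2 hc2 hp0 hp2
    simp only [hIdef]
    rw [show i + 2 = i + 1 + 1 from rfl, iteratedDeriv_succ (n := i + 1), iteratedDeriv_succ (n := i)]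
    exact hb
  have main := chain_pow I hInn k hchain l (k - l) (by omega)
  have hI0 : I 0 = ∫ x in (0:ℝ)..1, ‖u x‖ := by simp only [hIdef, iteratedDeriv_zero]
  set A : ℝ := ∫ x in (0:ℝ)..1, ‖u x‖ with hAdef
  set Bk : ℝ := ∫ x in (0:ℝ)..1, ‖iteratedDeriv k u x‖ with hBdef
  have hAnn : 0 ≤ A := hI0 ▸ hInn 0
  have hBnn : 0 ≤ Bk := hInn k
  have hIl : I l = ∫ x in (0:ℝ)..1, ‖iteratedDeriv l u x‖ := rfl
  -- step 1
  have ecast : ((k - l : ℕ) : ℝ) = (k : ℝ) - (l : ℝ) := by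
    push_cast [hl]
    ring
  have eA : (A ^ (1 - (l:ℝ)/(k:ℝ))) ^ k = A ^ (k - l : ℕ) := by
    rw [← Real.rpow_natCast (A ^ (1 - (l:ℝ)/(k:ℝ))) k, ← Real.rpow_mul hAnn, ← Real.rpow_natCast A (k - l)]
    congr 1
    rw [ecast]
    field_simp
  have eB : (Bk ^ ((l:ℝ)/(k:ℝ))) ^ k = Bk ^ l := by
    rw [← Real.rpow_natCast (Bk ^ ((l:ℝ)/(k:ℝ))) k, ← Real.rpow_mul hBnn, ← Real.rpow_natCast Bk l]
    congr 1
    field_simp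
  have step1 : I l ≤ 2 ^ (l * (k - l)) * A ^ (1 - (l:ℝ)/(k:ℝ)) * Bk ^ ((l:ℝ)/(k:ℝ)) := by
    have hrnn : (0:ℝ) ≤ 2 ^ (l * (k - l)) * A ^ (1 - (l:ℝ)/(k:ℝ)) * Bk ^ ((l:ℝ)/(k:ℝ)) := by
      have := Real.rpow_nonneg hAnn (1 - (l:ℝ)/(k:ℝ))
      have := Real.rpow_nonneg hBnn ((l:ℝ)/(k:ℝ))
      positivity
    apply le_of_pow_le_pow_left₀ hk0 hrnn
    have erhs : (2 ^ (l * (k - l)) * A ^ (1 - (l:ℝ)/(k:ℝ)) * Bk ^ ((l:ℝ)/(k:ℝ))) ^ k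
        = 2 ^ (k * l * (k - l)) * (A ^ (k - l : ℕ) * Bk ^ l) := by
      rw [mul_pow, mul_pow, eA, eB, ← pow_mul]
      rw [show l * (k - l) * k = k * l * (k - l) by ring]
      ring
    rw [erhs]
    rw [hI0] at main
    exact main
  -- step 2
  have hfac : (2:ℝ) ^ (l * (k - l)) ≤ 2 ^ (3 * 2 ^ (k - 2) - 2 : ℕ) :=
    pow_le_pow_right₀ one_le_two (exp_bound k l hk hl)
  calc I l ≤ 2 ^ (l * (k - l)) * A ^ (1 - (l:ℝ)/(k:ℝ)) * Bk ^ ((l:ℝ)/(k:ℝ)) := step1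
    _ ≤ 2 ^ (3 * 2 ^ (k - 2) - 2 : ℕ) * A ^ (1 - (l:ℝ)/(k:ℝ)) * Bk ^ ((l:ℝ)/(k:ℝ)) := by
        have h1 := Real.rpow_nonneg hAnn (1 - (l:ℝ)/(k:ℝ))
        have h2 := Real.rpow_nonneg hBnn ((l:ℝ)/(k:ℝ))
        exact mul_le_mul_of_nonneg_right (mul_le_mul_of_nonneg_right hfac h1) h2
end

section
/- Let k ≥ 2 be an integer, let 1 < p < ∞ be a real number, and let u : ℝ → ℂ be k times continuously differentiable and periodic with period 1. Then for every integer l with 0 ≤ l ≤ k, (∫_0^1 |u^{(l)}(x)|^p dx)^{1/p} ≤ 2^{3·2^{k-2}-2} · (p/(p-1)) · (∫_0^1 |u(x)|^p dx)^{(1/p)(1 - l/k)} · (∫_0^1 |u^{(k)}(x)|^p dx)^{(1/p)(l/k)}. -/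
open MeasureTheory Set Function intervalIntegral ENNReal

namespace GN15

lemma combine {A B C : ℝ} (hA : 0 ≤ A) (hB : 0 ≤ B) (hC : 0 ≤ C)
    (h1 : A ≤ C) (h2 : ∀ h : ℝ, 0 < h → h ≤ 1 → h*A ≤ 2*B + h^2*C/2) :
    A^2 ≤ 4*(B*C) := by
  rcases le_or_gt C (4*B) with hcb | hbc
  · nlinarith
  · have hC0 : 0 < C := lt_of_le_of_lt (by linarith) hbc
    rcases eq_or_lt_of_le hB with hB0 | hB0
    · have hA0 : A ≤ 0 := by
        by_contra hA0
        push_neg at hA0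
        set h0 := min 1 (A/C) with hh0
        have hh : 0 < h0 := by positivity
        have hle : h0 ≤ A/C := min_le_right _ _
        have h2' := h2 h0 hh (min_le_left _ _)
        rw [← hB0] at h2'
        have hCC : h0 * C ≤ A := by
          rw [← div_mul_cancel₀ A (ne_of_gt hC0)]
          exact mul_le_mul_of_nonneg_right hle hC0.le
        nlinarith
      have : A = 0 := le_antisymm hA0 hA
      nlinarith
    · set sb := Real.sqrt B with hsb
      set sc := Real.sqrt C with hsc
      have hsb0 : 0 < sb := Real.sqrt_pos.2 hB0
      have hsc0 : 0 < sc := Real.sqrt_pos.2 hC0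
      have hsb2 : sb^2 = B := Real.sq_sqrt hB
      have hsc2 : sc^2 = C := Real.sq_sqrt hC
      set h := 2*sb/sc with hh
      have hh0 : 0 < h := by positivity
      have hh1 : h ≤ 1 := by
        rw [hh, div_le_one hsc0]
        nlinarith
      have h2' := h2 h hh0 hh1
      have hval : h^2*C/2 = 2*B := by
        rw [hh]
        field_simp
        nlinarith
      rw [hval] at h2'
      -- h*A ≤ 4*B, h = 2 sb/sc
      have hA2 : 2 * sb * A ≤ 4 * B * sc := by
        have h3 : (2*sb/sc)*A ≤ 4*B := by linarith
        have h4 := mul_le_mul_of_nonneg_right h3 hsc0.le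
        calc 2*sb*A = (2*sb/sc*A)*sc := by field_simp
          _ ≤ 4*B*sc := h4
      have hA3 : A ≤ 2*sb*sc := by nlinarith
      have hA4 := mul_le_mul hA3 hA3 hA (by positivity)
      nlinarith

lemma chain (c : ℝ) (hc0 : 0 ≤ c) : ∀ (k : ℕ) (N : ℕ → ℝ), (∀ j, 0 ≤ N j) →
    (∀ j, j + 2 ≤ k → N (j+1)^2 ≤ c^2*(N j * N (j+2))) →
    ∀ l, l ≤ k → N l ^ k ≤ c^(l*(k-l)*k) * (N 0 ^ (k-l) * N k ^ l) := by
  intro k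
  induction k with
  | zero =>
    intro N hN hcc l hl
    interval_cases l
    simp
  | succ k IH =>
    intro N hN hcc l hl
    rcases Nat.eq_or_lt_of_le hl with rfl | hlk
    · simp [Nat.sub_self]
    have hlk' : l ≤ k := Nat.lt_succ_iff.mp hlk
    rcases Nat.eq_zero_or_pos k with rfl | hk1
    · interval_cases l
      simp
    have hNn : ∀ j : ℕ, 0 ≤ N j := hN
    -- endpoint bound E
    have E : N k ^ (k+1) ≤ c^(k*(k+1)) * (N 0 * N (k+1) ^ k) := by
      rcases Nat.lt_or_ge k 2 with hk2 | hk2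
      · interval_cases k
        have := hcc 0 (by norm_num)
        calc N 1 ^ 2 ≤ c^2 * (N 0 * N 2) := this
          _ = c^(1*2) * (N 0 * N 2 ^ 1) := by ring
      · obtain ⟨m, rfl⟩ : ∃ m, k = m + 2 := ⟨k - 2, by omega⟩
        have hi : N (m+2) ^ (m+2) ≤ c^((m+1)*(m+2)) * (N 1 * N (m+3) ^ (m+1)) := by
          have := IH (fun j => N (j+1)) (fun j => hN _)
            (fun j hj => hcc (j+1) (by omega)) (m+1) (by omega)
          have e1 : m + 2 - (m+1) = 1 := by omega
          rw [e1] at this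
          calc N (m+2) ^ (m+2) = N (m+1+1) ^ (m+2) := by norm_num
            _ ≤ c^((m+1)*1*(m+2)) * (N (0+1) ^ 1 * N (m+1+1+1) ^ (m+1)) := this
            _ = c^((m+1)*(m+2)) * (N 1 * N (m+3) ^ (m+1)) := by norm_num
        have hii : N 1 ^ (m+2) ≤ c^((m+1)*(m+2)) * (N 0 ^ (m+1) * N (m+2)) := by
          have := IH N hN (fun j hj => hcc j (by omega)) 1 (by omega)
          have e1 : m + 2 - 1 = m + 1 := by omega
          rw [e1] at this
          calc N 1 ^ (m+2) ≤ c^(1*(m+1)*(m+2)) * (N 0 ^ (m+1) * N (m+2) ^ 1) := this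
            _ = c^((m+1)*(m+2)) * (N 0 ^ (m+1) * N (m+2)) := by ring
        have h2 : N (m+2) ^ ((m+2)*(m+2)) ≤ c^((m+1)*(m+2)*(m+2)) *
            (N 1 ^ (m+2) * N (m+3) ^ ((m+1)*(m+2))) := by
          calc N (m+2) ^ ((m+2)*(m+2)) = (N (m+2) ^ (m+2)) ^ (m+2) := by rw [← pow_mul]
            _ ≤ (c^((m+1)*(m+2)) * (N 1 * N (m+3) ^ (m+1)))^(m+2) :=
                pow_le_pow_left₀ (pow_nonneg (hNn _) _) hi _
            _ = c^((m+1)*(m+2)*(m+2)) * (N 1 ^ (m+2) * N (m+3) ^ ((m+1)*(m+2))) := by ring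
        have h3 : N (m+2) ^ ((m+2)*(m+2)) ≤ c^((m+1)*(m+2)*(m+2) + (m+1)*(m+2)) *
            (N 0 ^ (m+1) * N (m+3) ^ ((m+1)*(m+2))) * N (m+2) := by
          calc N (m+2) ^ ((m+2)*(m+2)) ≤ c^((m+1)*(m+2)*(m+2)) *
              (N 1 ^ (m+2) * N (m+3) ^ ((m+1)*(m+2))) := h2
            _ ≤ c^((m+1)*(m+2)*(m+2)) * ((c^((m+1)*(m+2)) * (N 0 ^ (m+1) * N (m+2))) *
                N (m+3) ^ ((m+1)*(m+2))) := by
                apply mul_le_mul_of_nonneg_left _ (pow_nonneg hc0 _)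
                apply mul_le_mul_of_nonneg_right hii (pow_nonneg (hNn _) _)
            _ = c^((m+1)*(m+2)*(m+2) + (m+1)*(m+2)) *
                (N 0 ^ (m+1) * N (m+3) ^ ((m+1)*(m+2))) * N (m+2) := by ring
        have h4 : N (m+2) ^ (m*m+4*m+3) ≤ c^((m+1)*(m+2)*(m+2) + (m+1)*(m+2)) *
            (N 0 ^ (m+1) * N (m+3) ^ ((m+1)*(m+2))) := by
          rcases eq_or_lt_of_le (hNn (m+2)) with hk0 | hk0
          · rw [← hk0, zero_pow (by positivity)]
            have h01 := hNn 0
            have h02 := hNn (m+3)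
            positivity
          · have h3' := h3
            rw [show (m+2)*(m+2) = (m*m+4*m+3)+1 from by ring, pow_succ] at h3'
            exact le_of_mul_le_mul_right h3' hk0
        have h5 : (N (m+2) ^ (m+3)) ^ (m+1) ≤
            (c^((m+2)*(m+3)) * (N 0 * N (m+3) ^ (m+2))) ^ (m+1) := by
          rw [← pow_mul, show (m+3)*(m+1) = m*m+4*m+3 from by ring]
          calc N (m+2) ^ (m*m+4*m+3) ≤ c^((m+1)*(m+2)*(m+2) + (m+1)*(m+2)) *
              (N 0 ^ (m+1) * N (m+3) ^ ((m+1)*(m+2))) := h4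
            _ = (c^((m+2)*(m+3)) * (N 0 * N (m+3) ^ (m+2))) ^ (m+1) := by ring
        exact (pow_le_pow_iff_left₀ (pow_nonneg (hNn _) _) (by
            have h01 := hNn 0
            have h02 := hNn (m+3)
            positivity) (by omega : m + 1 ≠ 0)).mp h5
    -- general l
    obtain ⟨d, rfl⟩ : ∃ d, k = l + d := ⟨k - l, by omega⟩
    have hIH : N l ^ (l+d) ≤ c^(l*d*(l+d)) * (N 0 ^ d * N (l+d) ^ l) := by
      have := IH N hN (fun j hj => hcc j (by omega)) l (by omega)
      rwa [show l + d - l = d by omega] at this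
    have h6 : (N l ^ (l+d+1)) ^ (l+d) ≤
        (c^(l*(d+1)*(l+d+1)) * (N 0 ^ (d+1) * N (l+d+1) ^ l)) ^ (l+d) := by
      have h7 : (N l ^ (l+d)) ^ (l+d+1) ≤ (c^(l*d*(l+d)) * (N 0 ^ d * N (l+d) ^ l))^(l+d+1) :=
        pow_le_pow_left₀ (pow_nonneg (hNn l) _) hIH _
      have h8 : (N (l+d) ^ (l+d+1)) ^ l ≤ (c^((l+d)*(l+d+1)) * (N 0 * N (l+d+1) ^ (l+d))) ^ l :=
        pow_le_pow_left₀ (pow_nonneg (hNn _) _) E l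
      calc (N l ^ (l+d+1))^(l+d) = (N l ^ (l+d))^(l+d+1) := by
            rw [← pow_mul, ← pow_mul]; ring_nf
        _ ≤ (c^(l*d*(l+d)) * (N 0 ^ d * N (l+d) ^ l))^(l+d+1) := h7
        _ = c^(l*d*(l+d)*(l+d+1)) * (N 0 ^ (d*(l+d+1)) * (N (l+d) ^ (l+d+1)) ^ l) := by ring
        _ ≤ c^(l*d*(l+d)*(l+d+1)) * (N 0 ^ (d*(l+d+1)) *
              (c^((l+d)*(l+d+1)) * (N 0 * N (l+d+1) ^ (l+d))) ^ l) := by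
            apply mul_le_mul_of_nonneg_left _ (pow_nonneg hc0 _)
            exact mul_le_mul_of_nonneg_left h8 (pow_nonneg (hNn 0) _)
        _ = (c^(l*(d+1)*(l+d+1)) * (N 0 ^ (d+1) * N (l+d+1) ^ l)) ^ (l+d) := by ring
    have := (pow_le_pow_iff_left₀ (pow_nonneg (hNn l) _) (by
        have h01 := hNn 0
        have h02 := hNn (l+d+1)
        positivity) (by omega : l + d ≠ 0)).mp h6
    rw [show l + d + 1 - l = d + 1 by omega]
    exact this


section Analytic

variable {p : ℝ}

lemma contRpow (G : ℝ → ℝ) (hG : Continuous G) (hp0 : 0 ≤ p) :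
    Continuous (fun x => G x ^ p) :=
  hG.rpow_const (fun x => Or.inr hp0)

lemma C1 (G : ℝ → ℝ) (hG : Continuous G) (hnn : ∀ x, 0 ≤ G x) (a b : ℝ) (hab : a ≤ b) :
    ∫⁻ x in Set.Ioc a b, ENNReal.ofReal (G x) = ENNReal.ofReal (∫ x in a..b, G x) := by
  rw [intervalIntegral.integral_of_le hab]
  exact (MeasureTheory.ofReal_integral_eq_lintegral_ofReal hG.integrableOn_Ioc
    (Filter.Eventually.of_forall (fun x => hnn x))).symm

lemma C2 (hp0 : 0 ≤ p) (G : ℝ → ℝ) (hG : Continuous G) (hnn : ∀ x, 0 ≤ G x) (a b : ℝ)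
    (hab : a ≤ b) :
    ∫⁻ x in Set.Ioc a b, ENNReal.ofReal (G x) ^ p = ENNReal.ofReal (∫ x in a..b, G x ^ p) := by
  have e : ∀ x, ENNReal.ofReal (G x) ^ p = ENNReal.ofReal (G x ^ p) :=
    fun x => ENNReal.ofReal_rpow_of_nonneg (hnn x) hp0
  simp only [e]
  exact C1 _ (contRpow G hG hp0) (fun x => Real.rpow_nonneg (hnn x) p) a b hab

lemma int_nonneg (G : ℝ → ℝ) (hnn : ∀ x, 0 ≤ G x) {a b : ℝ} (hab : a ≤ b) :
    0 ≤ ∫ x in a..b, G x :=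
  intervalIntegral.integral_nonneg hab (fun x _ => hnn x)

/-- conversion of Lp-type quantity -/
lemma LpConv (hp0 : 0 ≤ p) (G : ℝ → ℝ) (hG : Continuous G) (hnn : ∀ x, 0 ≤ G x) :
    (∫ x in (0:ℝ)..1, G x ^ p) ^ (1/p)
      = ((∫⁻ x in Set.Ioc (0:ℝ) 1, ENNReal.ofReal (G x) ^ p) ^ (1/p)).toReal := by
  rw [C2 hp0 G hG hnn 0 1 zero_le_one, ← ENNReal.toReal_rpow, ENNReal.toReal_ofReal]
  exact int_nonneg _ (fun x => Real.rpow_nonneg (hnn x) p) zero_le_one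

/-- Minkowski for three functions -/
lemma mink3 (hp1 : 1 ≤ p) (F G1 G2 G3 : ℝ → ℝ) (hF : Continuous F) (h1 : Continuous G1)
    (h2 : Continuous G2) (h3 : Continuous G3) (hFnn : ∀ x, 0 ≤ F x) (h1nn : ∀ x, 0 ≤ G1 x)
    (h2nn : ∀ x, 0 ≤ G2 x) (h3nn : ∀ x, 0 ≤ G3 x)
    (hpt : ∀ x ∈ Set.Ioc (0:ℝ) 1, F x ≤ G1 x + G2 x + G3 x) :
    (∫ x in (0:ℝ)..1, F x ^ p) ^ (1/p) ≤ (∫ x in (0:ℝ)..1, G1 x ^ p) ^ (1/p)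
      + (∫ x in (0:ℝ)..1, G2 x ^ p) ^ (1/p) + (∫ x in (0:ℝ)..1, G3 x ^ p) ^ (1/p) := by
  have hp0 : 0 ≤ p := le_trans zero_le_one hp1
  set o1 : ℝ → ℝ≥0∞ := fun x => ENNReal.ofReal (G1 x) with ho1
  set o2 : ℝ → ℝ≥0∞ := fun x => ENNReal.ofReal (G2 x) with ho2
  set o3 : ℝ → ℝ≥0∞ := fun x => ENNReal.ofReal (G3 x) with ho3
  have m1 : AEMeasurable o1 (volume.restrict (Set.Ioc (0:ℝ) 1)) :=
    (ENNReal.continuous_ofReal.comp h1).measurable.aemeasurable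
  have m2 : AEMeasurable o2 (volume.restrict (Set.Ioc (0:ℝ) 1)) :=
    (ENNReal.continuous_ofReal.comp h2).measurable.aemeasurable
  have m3 : AEMeasurable o3 (volume.restrict (Set.Ioc (0:ℝ) 1)) :=
    (ENNReal.continuous_ofReal.comp h3).measurable.aemeasurable
  have step1 : (∫⁻ x in Set.Ioc (0:ℝ) 1, ENNReal.ofReal (F x) ^ p)
      ≤ ∫⁻ x in Set.Ioc (0:ℝ) 1, ((o1 + o2) + o3) x ^ p := by
    apply MeasureTheory.setLIntegral_mono
    · apply Measurable.pow_const
      exact (((ENNReal.continuous_ofReal.comp h1).add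
        (ENNReal.continuous_ofReal.comp h2)).add (ENNReal.continuous_ofReal.comp h3)).measurable
    · intro x hx
      apply ENNReal.rpow_le_rpow _ hp0
      simp only [Pi.add_apply, ho1, ho2, ho3]
      rw [← ENNReal.ofReal_add (h1nn x) (h2nn x), ← ENNReal.ofReal_add
        (add_nonneg (h1nn x) (h2nn x)) (h3nn x)]
      exact ENNReal.ofReal_le_ofReal (hpt x hx)
  have step2 : (∫⁻ x in Set.Ioc (0:ℝ) 1, ((o1 + o2) + o3) x ^ p) ^ (1/p)
      ≤ (∫⁻ x in Set.Ioc (0:ℝ) 1, o1 x ^ p) ^ (1/p)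
        + (∫⁻ x in Set.Ioc (0:ℝ) 1, o2 x ^ p) ^ (1/p)
        + (∫⁻ x in Set.Ioc (0:ℝ) 1, o3 x ^ p) ^ (1/p) := by
    calc (∫⁻ x in Set.Ioc (0:ℝ) 1, ((o1 + o2) + o3) x ^ p) ^ (1/p)
        ≤ (∫⁻ x in Set.Ioc (0:ℝ) 1, (o1 + o2) x ^ p) ^ (1/p)
          + (∫⁻ x in Set.Ioc (0:ℝ) 1, o3 x ^ p) ^ (1/p) :=
        ENNReal.lintegral_Lp_add_le (m1.add m2) m3 hp1
      _ ≤ ((∫⁻ x in Set.Ioc (0:ℝ) 1, o1 x ^ p) ^ (1/p)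
          + (∫⁻ x in Set.Ioc (0:ℝ) 1, o2 x ^ p) ^ (1/p))
          + (∫⁻ x in Set.Ioc (0:ℝ) 1, o3 x ^ p) ^ (1/p) := by
        exact add_le_add_left (ENNReal.lintegral_Lp_add_le m1 m2 hp1) _
  have hle := le_trans (ENNReal.rpow_le_rpow step1 (by positivity : 0 ≤ 1/p)) step2
  rw [LpConv hp0 F hF hFnn, LpConv hp0 G1 h1 h1nn, LpConv hp0 G2 h2 h2nn, LpConv hp0 G3 h3 h3nn]
  have fin : ∀ (G : ℝ → ℝ) (hG : Continuous G) (hnn : ∀ x, 0 ≤ G x),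
      (∫⁻ x in Set.Ioc (0:ℝ) 1, ENNReal.ofReal (G x) ^ p) ^ (1/p) ≠ ⊤ := by
    intro G hG hnn
    rw [C2 hp0 G hG hnn 0 1 zero_le_one]
    exact ENNReal.rpow_ne_top_of_nonneg (by positivity) ENNReal.ofReal_ne_top
  rw [← ENNReal.toReal_add (fin G1 h1 h1nn) (fin G2 h2 h2nn),
    ← ENNReal.toReal_add (by exact ENNReal.add_ne_top.mpr ⟨fin G1 h1 h1nn, fin G2 h2 h2nn⟩)
      (fin G3 h3 h3nn)]
  exact ENNReal.toReal_mono (by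
    exact ENNReal.add_ne_top.mpr ⟨ENNReal.add_ne_top.mpr ⟨fin G1 h1 h1nn, fin G2 h2 h2nn⟩,
      fin G3 h3 h3nn⟩) hle

/-- shift invariance -/
lemma shiftInv (F : ℝ → ℝ) (hFc : Continuous F) (hper : ∀ x, F (x+1) = F x) (s : ℝ) :
    ∫ x in (0:ℝ)..1, F (x + s) = ∫ x in (0:ℝ)..1, F x := by
  have hper' : Function.Periodic F 1 := hper
  rw [intervalIntegral.integral_comp_add_right F s]
  rw [zero_add, add_comm 1 s]
  have := hper'.intervalIntegral_add_eq s 0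
  simpa using this

/-- master weighted Jensen bound -/
lemma masterT (hp : 1 < p) (w g : ℝ → ℝ) (hw : Continuous w) (hg : Continuous g)
    (hwnn : ∀ x, 0 ≤ w x) (hgnn : ∀ x, 0 ≤ g x) (hgper : ∀ x, g (x+1) = g x)
    {h : ℝ} (hh : 0 < h) :
    ∫ x in (0:ℝ)..1, (∫ s in (0:ℝ)..h, w s * g (x+s)) ^ p
      ≤ (∫ s in (0:ℝ)..h, w s) ^ p * ∫ x in (0:ℝ)..1, g x ^ p := by
  have hp0 : 0 < p := lt_trans zero_lt_one hp
  set q : ℝ := Real.conjExponent p with hq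
  have hpq : p.HolderConjugate q := Real.HolderConjugate.conjExponent hp
  set W : ℝ := ∫ s in (0:ℝ)..h, w s with hW
  have hWnn : 0 ≤ W := int_nonneg w hwnn hh.le
  set J : ℝ := ∫ x in (0:ℝ)..1, g x ^ p with hJ
  have hJnn : 0 ≤ J := int_nonneg _ (fun x => Real.rpow_nonneg (hgnn x) p) zero_le_one
  set b : ℝ → ℝ := fun x => ∫ s in (0:ℝ)..h, w s * g (x+s) with hb
  have hKc : Continuous (Function.uncurry fun (x : ℝ) (s : ℝ) => w s * g (x+s)) :=
    (hw.comp continuous_snd).mul (hg.comp (continuous_fst.add continuous_snd))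
  have hbc : Continuous b :=
    intervalIntegral.continuous_parametric_intervalIntegral_of_continuous' hKc 0 h
  have hbnn : ∀ x, 0 ≤ b x :=
    fun x => int_nonneg _ (fun s => mul_nonneg (hwnn s) (hgnn _)) hh.le
  set K : ℝ → ℝ≥0∞ := fun s => ENNReal.ofReal (w s) with hK
  have hKm : Measurable K := (ENNReal.continuous_ofReal.comp hw).measurable
  have hKW : (∫⁻ s in Set.Ioc (0:ℝ) h, K s) = ENNReal.ofReal W := C1 w hw hwnn 0 h hh.le
  have hqp : 1/q * p = p - 1 := by
    rw [hq, Real.conjExponent]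
    field_simp
  -- Step 1: pointwise Hoelder
  have step1 : ∀ x : ℝ, ENNReal.ofReal (b x) ^ p
      ≤ ENNReal.ofReal W ^ (p - 1) *
        ∫⁻ s in Set.Ioc (0:ℝ) h, K s * ENNReal.ofReal (g (x+s)) ^ p := by
    intro x
    have e1 : ENNReal.ofReal (b x)
        = ∫⁻ s in Set.Ioc (0:ℝ) h, K s * ENNReal.ofReal (g (x+s)) := by
      rw [hb]
      rw [← C1 (fun s => w s * g (x+s))
        (hw.mul (hg.comp (continuous_const.add continuous_id)))
        (fun s => mul_nonneg (hwnn s) (hgnn _)) 0 h hh.le]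
      exact MeasureTheory.lintegral_congr (fun s => ENNReal.ofReal_mul (hwnn s))
    have hgm : Measurable fun s => ENNReal.ofReal (g (x+s)) :=
      (ENNReal.continuous_ofReal.comp (hg.comp (continuous_const.add continuous_id))).measurable
    have hold := ENNReal.lintegral_mul_le_Lp_mul_Lq (volume.restrict (Set.Ioc (0:ℝ) h)) hpq
      (f := fun s => K s ^ (1/p) * ENNReal.ofReal (g (x+s)))
      (g := fun s => K s ^ (1/q))
      (((hKm.pow_const _).mul hgm).aemeasurable) ((hKm.pow_const _).aemeasurable)
    have eprod : (fun s => ((fun s => K s ^ (1/p) * ENNReal.ofReal (g (x+s))) *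
        (fun s => K s ^ (1/q))) s) = fun s => K s * ENNReal.ofReal (g (x+s)) := by
      funext s
      simp only [Pi.mul_apply]
      rw [mul_right_comm, ← ENNReal.rpow_add_of_nonneg _ _ (by positivity)
        (by have := hpq.symm.pos; positivity)]
      rw [show 1/p + 1/q = 1 by rw [one_div, one_div]; exact hpq.inv_add_inv_eq_one,
        ENNReal.rpow_one]
    have ef : ∀ s : ℝ, ((K s ^ (1/p) * ENNReal.ofReal (g (x+s)))) ^ p
        = K s * ENNReal.ofReal (g (x+s)) ^ p := by
      intro s
      rw [ENNReal.mul_rpow_of_nonneg _ _ hp0.le, ← ENNReal.rpow_mul,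
        one_div_mul_cancel hp0.ne', ENNReal.rpow_one]
    have eg : ∀ s : ℝ, (K s ^ (1/q)) ^ q = K s := by
      intro s
      rw [← ENNReal.rpow_mul, one_div_mul_cancel hpq.symm.pos.ne', ENNReal.rpow_one]
    rw [eprod] at hold
    simp only [ef, eg] at hold
    rw [← e1, hKW] at hold
    calc ENNReal.ofReal (b x) ^ p
        ≤ ((∫⁻ s in Set.Ioc (0:ℝ) h, K s * ENNReal.ofReal (g (x+s)) ^ p) ^ (1/p)
          * ENNReal.ofReal W ^ (1/q)) ^ p := ENNReal.rpow_le_rpow hold hp0.le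
      _ = ENNReal.ofReal W ^ (p-1) *
          ∫⁻ s in Set.Ioc (0:ℝ) h, K s * ENNReal.ofReal (g (x+s)) ^ p := by
          rw [ENNReal.mul_rpow_of_nonneg _ _ hp0.le, ← ENNReal.rpow_mul, ← ENNReal.rpow_mul,
            one_div_mul_cancel hp0.ne', ENNReal.rpow_one, hqp, mul_comm]
  -- Step 2-6
  have hprodm : Measurable (Function.uncurry
      fun (x : ℝ) (s : ℝ) => K s * ENNReal.ofReal (g (x+s)) ^ p) := by
    apply Measurable.mul
    · exact (ENNReal.continuous_ofReal.comp (hw.comp continuous_snd)).measurable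
    · apply Measurable.pow_const
      exact (ENNReal.continuous_ofReal.comp
        (hg.comp (continuous_fst.add continuous_snd))).measurable
  have hΦm : Measurable fun x => ∫⁻ s in Set.Ioc (0:ℝ) h, K s * ENNReal.ofReal (g (x+s)) ^ p :=
    Measurable.lintegral_prod_right' (ν := volume.restrict (Set.Ioc (0:ℝ) h)) hprodm
  have step2 : (∫⁻ x in Set.Ioc (0:ℝ) 1, ENNReal.ofReal (b x) ^ p)
      ≤ ENNReal.ofReal W ^ (p-1) * ∫⁻ x in Set.Ioc (0:ℝ) 1,
          (∫⁻ s in Set.Ioc (0:ℝ) h, K s * ENNReal.ofReal (g (x+s)) ^ p) := by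
    calc (∫⁻ x in Set.Ioc (0:ℝ) 1, ENNReal.ofReal (b x) ^ p)
        ≤ ∫⁻ x in Set.Ioc (0:ℝ) 1, ENNReal.ofReal W ^ (p-1) *
            (∫⁻ s in Set.Ioc (0:ℝ) h, K s * ENNReal.ofReal (g (x+s)) ^ p) :=
        MeasureTheory.setLIntegral_mono (Measurable.const_mul hΦm _) (fun x _ => step1 x)
      _ = ENNReal.ofReal W ^ (p-1) * ∫⁻ x in Set.Ioc (0:ℝ) 1,
            (∫⁻ s in Set.Ioc (0:ℝ) h, K s * ENNReal.ofReal (g (x+s)) ^ p) :=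
        MeasureTheory.lintegral_const_mul _ hΦm
  have step4 : (∫⁻ x in Set.Ioc (0:ℝ) 1,
        ∫⁻ s in Set.Ioc (0:ℝ) h, K s * ENNReal.ofReal (g (x+s)) ^ p)
      = ∫⁻ s in Set.Ioc (0:ℝ) h, ∫⁻ x in Set.Ioc (0:ℝ) 1, K s * ENNReal.ofReal (g (x+s)) ^ p :=
    MeasureTheory.lintegral_lintegral_swap hprodm.aemeasurable
  have step5 : ∀ s : ℝ, (∫⁻ x in Set.Ioc (0:ℝ) 1, K s * ENNReal.ofReal (g (x+s)) ^ p)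
      = K s * ENNReal.ofReal J := by
    intro s
    rw [MeasureTheory.lintegral_const_mul _ (by
      apply Measurable.pow_const
      exact (ENNReal.continuous_ofReal.comp
        (hg.comp (continuous_id.add continuous_const))).measurable)]
    congr 1
    rw [C2 hp0.le (fun x => g (x+s)) (hg.comp (continuous_id.add continuous_const))
      (fun x => hgnn _) 0 1 zero_le_one]
    congr 1
    rw [hJ]
    exact shiftInv (fun t => g t ^ p) (contRpow g hg hp0.le)
      (fun x => by simp only [hgper x]) s
  have step6 : (∫⁻ s in Set.Ioc (0:ℝ) h, K s * ENNReal.ofReal J)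
      = ENNReal.ofReal W * ENNReal.ofReal J := by
    rw [MeasureTheory.lintegral_mul_const _ hKm, hKW]
  have total : ENNReal.ofReal (∫ x in (0:ℝ)..1, b x ^ p)
      ≤ ENNReal.ofReal W ^ (p-1) * (ENNReal.ofReal W * ENNReal.ofReal J) := by
    rw [← C2 hp0.le b hbc hbnn 0 1 zero_le_one]
    calc (∫⁻ x in Set.Ioc (0:ℝ) 1, ENNReal.ofReal (b x) ^ p)
        ≤ ENNReal.ofReal W ^ (p-1) * ∫⁻ x in Set.Ioc (0:ℝ) 1,
            (∫⁻ s in Set.Ioc (0:ℝ) h, K s * ENNReal.ofReal (g (x+s)) ^ p) := step2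
      _ = ENNReal.ofReal W ^ (p-1) * ∫⁻ s in Set.Ioc (0:ℝ) h,
            (∫⁻ x in Set.Ioc (0:ℝ) 1, K s * ENNReal.ofReal (g (x+s)) ^ p) := by rw [step4]
      _ = ENNReal.ofReal W ^ (p-1) * ∫⁻ s in Set.Ioc (0:ℝ) h, K s * ENNReal.ofReal J := by
          congr 1
          exact MeasureTheory.lintegral_congr step5
      _ = ENNReal.ofReal W ^ (p-1) * (ENNReal.ofReal W * ENNReal.ofReal J) := by rw [step6]
  have rhseq : ENNReal.ofReal W ^ (p-1) * (ENNReal.ofReal W * ENNReal.ofReal J)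
      = ENNReal.ofReal (W ^ p * J) := by
    rw [ENNReal.ofReal_rpow_of_nonneg hWnn (by linarith : (0:ℝ) ≤ p - 1),
      ← ENNReal.ofReal_mul hWnn, ← ENNReal.ofReal_mul (Real.rpow_nonneg hWnn _)]
    congr 1
    rw [show W ^ (p-1) * (W * J) = (W ^ (p-1) * W ^ (1:ℝ)) * J by rw [Real.rpow_one]; ring]
    rw [← Real.rpow_add' hWnn (by norm_num; linarith)]
    norm_num
  rw [rhseq] at total
  exact (ENNReal.ofReal_le_ofReal_iff (mul_nonneg (Real.rpow_nonneg hWnn p) hJnn)).mp total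

end Analytic


section Base

variable {p : ℝ}

lemma derivPeriodic (f : ℝ → ℂ) (hf : ∀ x, f (x+1) = f x) (x : ℝ) :
    deriv f (x+1) = deriv f x := by
  have hfe : (fun y => f (y + 1)) = f := funext hf
  rw [← deriv_comp_add_const (f := f) (a := 1) (x := x), hfe]

lemma baseIneq (hp : 1 < p) (v : ℝ → ℂ)
    (hd1 : Differentiable ℝ v) (hcd : Continuous (deriv v))
    (hd2 : Differentiable ℝ (deriv v)) (hcdd : Continuous (deriv (deriv v)))
    (hper : ∀ x, v (x+1) = v x) :
    ((∫ x in (0:ℝ)..1, ‖deriv v x‖ ^ p) ^ (1/p))^2 ≤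
      4 * (((∫ x in (0:ℝ)..1, ‖v x‖ ^ p) ^ (1/p)) *
        ((∫ x in (0:ℝ)..1, ‖deriv (deriv v) x‖ ^ p) ^ (1/p))) := by
  have hp0 : 0 < p := lt_trans zero_lt_one hp
  have hp0' : 0 ≤ p := hp0.le
  have hp1 : 1 ≤ p := hp.le
  have hvc : Continuous v := hd1.continuous
  set g : ℝ → ℝ := fun t => ‖deriv (deriv v) t‖ with hg
  have hgc : Continuous g := hcdd.norm
  have hgnn : ∀ t, 0 ≤ g t := fun t => norm_nonneg _
  have hperd : ∀ x, deriv v (x+1) = deriv v x := derivPeriodic v hper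
  have hperdd : ∀ x, deriv (deriv v) (x+1) = deriv (deriv v) x := derivPeriodic _ hperd
  have hgper : ∀ x, g (x+1) = g x := fun x => by rw [hg]; simp only [hperdd x]
  set I0 : ℝ := ∫ x in (0:ℝ)..1, ‖v x‖ ^ p with hI0
  set I1 : ℝ := ∫ x in (0:ℝ)..1, ‖deriv v x‖ ^ p with hI1
  set I2 : ℝ := ∫ x in (0:ℝ)..1, ‖deriv (deriv v) x‖ ^ p with hI2
  have hI0nn : 0 ≤ I0 := int_nonneg _ (fun x => Real.rpow_nonneg (norm_nonneg _) p) zero_le_one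
  have hI1nn : 0 ≤ I1 := int_nonneg _ (fun x => Real.rpow_nonneg (norm_nonneg _) p) zero_le_one
  have hI2nn : 0 ≤ I2 := int_nonneg _ (fun x => Real.rpow_nonneg (norm_nonneg _) p) zero_le_one
  set N0 : ℝ := I0 ^ (1/p) with hN0
  set N1 : ℝ := I1 ^ (1/p) with hN1
  set N2 : ℝ := I2 ^ (1/p) with hN2
  -- Case A : N1 ≤ N2
  have caseA : N1 ≤ N2 := by
    set c : ℝ := ∫ t in (0:ℝ)..1, g t with hc
    have hcnn : 0 ≤ c := int_nonneg g hgnn zero_le_one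
    have hv10 : v 1 = v 0 := by simpa using hper 0
    have hint0 : ∫ y in (0:ℝ)..1, deriv v y = 0 := by
      rw [intervalIntegral.integral_deriv_eq_sub (fun y _ => hd1 y)
        (hcd.intervalIntegrable 0 1), hv10, sub_self]
    have hpt : ∀ x ∈ Set.Icc (0:ℝ) 1, ‖deriv v x‖ ≤ c := by
      intro x hx
      have key : ∫ y in (0:ℝ)..1, (deriv v x - deriv v y) = deriv v x := by
        rw [intervalIntegral.integral_sub intervalIntegrable_const
          (hcd.intervalIntegrable 0 1), hint0, sub_zero, intervalIntegral.integral_const]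
        simp
      have hb : ∀ y ∈ Set.uIoc (0:ℝ) 1, ‖deriv v x - deriv v y‖ ≤ c := by
        intro y hy
        rw [Set.uIoc_of_le zero_le_one] at hy
        have hy' : y ∈ Set.Icc (0:ℝ) 1 := ⟨le_of_lt hy.1, hy.2⟩
        have e2 : deriv v x - deriv v y = ∫ t in y..x, deriv (deriv v) t := by
          rw [intervalIntegral.integral_deriv_eq_sub (fun t _ => hd2 t)
            (hcdd.intervalIntegrable y x)]
        rw [e2]
        calc ‖∫ t in y..x, deriv (deriv v) t‖ ≤ |∫ t in y..x, ‖deriv (deriv v) t‖| :=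
            intervalIntegral.norm_integral_le_abs_integral_norm
          _ ≤ |∫ t in (0:ℝ)..1, g t| := by
            apply intervalIntegral.abs_integral_mono_interval _ _ (hgc.intervalIntegrable 0 1)
            · rw [Set.uIoc_of_le zero_le_one]
              rcases le_total y x with hyx | hyx
              · rw [Set.uIoc_of_le hyx]
                exact Set.Ioc_subset_Ioc hy'.1 hx.2
              · rw [Set.uIoc_of_ge hyx]
                exact Set.Ioc_subset_Ioc hx.1 hy'.2
            · exact Filter.Eventually.of_forall (fun t => hgnn t)
          _ = c := abs_of_nonneg hcnn
      calc ‖deriv v x‖ = ‖∫ y in (0:ℝ)..1, (deriv v x - deriv v y)‖ := by rw [key]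
        _ ≤ c * |1 - 0| := intervalIntegral.norm_integral_le_of_norm_le_const hb
        _ = c := by norm_num
    have I1c : I1 ≤ c ^ p := by
      have hmono : I1 ≤ ∫ x in (0:ℝ)..1, c ^ p := by
        apply intervalIntegral.integral_mono_on zero_le_one
          ((contRpow _ hcd.norm hp0').intervalIntegrable 0 1) intervalIntegrable_const
        exact fun x hx => Real.rpow_le_rpow (norm_nonneg _) (hpt x hx) hp0'
      simpa using hmono
    have cpI2 : c ^ p ≤ I2 := by
      have hm := masterT hp (fun _ => (1:ℝ)) g continuous_const hgc
        (fun _ => zero_le_one) hgnn hgper zero_lt_one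
      have hinner : ∀ x : ℝ, (∫ s in (0:ℝ)..1, (1:ℝ) * g (x+s)) = c := by
        intro x
        simp only [one_mul]
        have : (fun s : ℝ => g (x + s)) = fun s : ℝ => g (s + x) := by
          funext s; rw [add_comm]
        rw [this]
        exact shiftInv g hgc hgper x
      rw [show (∫ s in (0:ℝ)..1, (1:ℝ)) = 1 by simp] at hm
      simp only [hinner] at hm
      rw [Real.one_rpow, one_mul] at hm
      calc c ^ p = ∫ x in (0:ℝ)..1, c ^ p := by simp
        _ ≤ I2 := hm
    exact Real.rpow_le_rpow hI1nn (le_trans I1c cpI2) (by positivity)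
  -- Case B : for each 0 < h ≤ 1
  have caseB : ∀ h : ℝ, 0 < h → h ≤ 1 → h * N1 ≤ 2 * N0 + h^2 * N2 / 2 := by
    intro h hh hh1
    set w : ℝ → ℝ := fun s => |h - s| with hw
    have hwc : Continuous w := (continuous_const.sub continuous_id).abs
    have hwnn : ∀ s, 0 ≤ w s := fun s => abs_nonneg _
    set r : ℝ → ℝ := fun x => ∫ s in (0:ℝ)..h, w s * g (x+s) with hr
    have hKc : Continuous (Function.uncurry fun (x : ℝ) (s : ℝ) => w s * g (x+s)) :=
      (hwc.comp continuous_snd).mul (hgc.comp (continuous_fst.add continuous_snd))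
    have hrc : Continuous r :=
      intervalIntegral.continuous_parametric_intervalIntegral_of_continuous' hKc 0 h
    have hrnn : ∀ x, 0 ≤ r x :=
      fun x => int_nonneg _ (fun s => mul_nonneg (hwnn s) (hgnn _)) hh.le
    have hWval : (∫ s in (0:ℝ)..h, w s) = h^2/2 := by
      have hEq : Set.EqOn (fun s => |h - s|) (fun s => h - s) (Set.uIcc (0:ℝ) h) := by
        intro s hs
        rw [Set.uIcc_of_le hh.le] at hs
        exact abs_of_nonneg (by linarith [hs.2])
      rw [hw]
      rw [intervalIntegral.integral_congr hEq]
      rw [intervalIntegral.integral_sub intervalIntegrable_const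
        intervalIntegrable_id, intervalIntegral.integral_const, integral_id]
      simp
      ring
    -- pointwise bound
    have hptB : ∀ x : ℝ, h * ‖deriv v x‖ ≤ ‖v (x+h)‖ + ‖v x‖ + r x := by
      intro x
      set Iv : ℂ := ∫ t in x..(x+h), (x + h - t) • deriv (deriv v) t with hIv
      have hF : ∀ t ∈ Set.uIcc x (x+h), HasDerivAt
          (fun t => v t + (x + h - t) • deriv v t) ((x + h - t) • deriv (deriv v) t) t := by
        intro t _
        have h1 : HasDerivAt v (deriv v t) t := (hd1 t).hasDerivAt
        have h2 : HasDerivAt (fun t : ℝ => x + h - t) (-1) t :=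
          (hasDerivAt_id t).const_sub (x+h)
        have h3 : HasDerivAt (deriv v) (deriv (deriv v) t) t := (hd2 t).hasDerivAt
        have h4 := h2.smul h3
        have h5 := h1.add h4
        convert h5 using 1
        · rfl
        · rfl
        · simp [neg_smul]
      have hInt : Iv = (v (x+h) + (x + h - (x+h)) • deriv v (x+h))
          - (v x + (x + h - x) • deriv v x) := by
        rw [hIv]
        exact intervalIntegral.integral_eq_sub_of_hasDerivAt hF
          (((continuous_const.sub continuous_id).smul hcdd).intervalIntegrable x (x+h))
      have hIdent : h • deriv v x = v (x+h) - v x - Iv := by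
        rw [hInt]
        simp only [sub_self, zero_smul, add_zero, add_sub_cancel_left]
        abel
      have hIvle : ‖Iv‖ ≤ r x := by
        have le1 : ‖Iv‖ ≤ ∫ t in x..(x+h), ‖(x + h - t) • deriv (deriv v) t‖ := by
          rw [hIv]
          exact intervalIntegral.norm_integral_le_integral_norm (by linarith)
        have e2 : (fun t => ‖(x + h - t) • deriv (deriv v) t‖)
            = fun t => |x + h - t| * g t := by
          funext t
          rw [norm_smul, Real.norm_eq_abs]
        have e3 : ∫ t in x..(x+h), |x + h - t| * g t = r x := by
          have := intervalIntegral.integral_comp_add_right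
            (f := fun t => |x + h - t| * g t) (a := 0) (b := h) x
          rw [zero_add, add_comm h x] at this
          rw [← this, hr]
          apply intervalIntegral.integral_congr
          intro s _
          show |x + h - (s + x)| * g (s + x) = w s * g (x + s)
          rw [hw]
          simp only
          rw [show x + h - (s + x) = h - s by ring, add_comm s x]
        calc ‖Iv‖ ≤ ∫ t in x..(x+h), ‖(x + h - t) • deriv (deriv v) t‖ := le1
          _ = ∫ t in x..(x+h), |x + h - t| * g t := by rw [e2]
          _ = r x := e3
      calc h * ‖deriv v x‖ = ‖h • deriv v x‖ := by
            rw [norm_smul, Real.norm_eq_abs, abs_of_pos hh]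
        _ = ‖v (x+h) - v x - Iv‖ := by rw [hIdent]
        _ ≤ ‖v (x+h) - v x‖ + ‖Iv‖ := norm_sub_le _ _
        _ ≤ (‖v (x+h)‖ + ‖v x‖) + ‖Iv‖ := by
            exact add_le_add_left (norm_sub_le _ _) _
        _ ≤ ‖v (x+h)‖ + ‖v x‖ + r x := by linarith [hIvle]
    -- Minkowski
    have hmink := mink3 hp1 (fun x => h * ‖deriv v x‖) (fun x => ‖v (x+h)‖)
      (fun x => ‖v x‖) r (continuous_const.mul hcd.norm)
      ((hvc.comp (continuous_id.add continuous_const)).norm) hvc.norm hrc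
      (fun x => mul_nonneg hh.le (norm_nonneg _)) (fun x => norm_nonneg _)
      (fun x => norm_nonneg _) hrnn (fun x _ => hptB x)
    -- LHS = h * N1
    have hLHS : (∫ x in (0:ℝ)..1, (h * ‖deriv v x‖) ^ p) ^ (1/p) = h * N1 := by
      have e : (fun x => (h * ‖deriv v x‖) ^ p) = fun x => h^p * ‖deriv v x‖ ^ p := by
        funext x
        rw [Real.mul_rpow hh.le (norm_nonneg _)]
      rw [e, intervalIntegral.integral_const_mul, Real.mul_rpow
        (Real.rpow_nonneg hh.le p) hI1nn, ← Real.rpow_mul hh.le,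
        mul_one_div_cancel hp0.ne', Real.rpow_one]
    have hG1 : (∫ x in (0:ℝ)..1, ‖v (x+h)‖ ^ p) ^ (1/p) = N0 := by
      have := shiftInv (fun t => ‖v t‖ ^ p) (contRpow _ hvc.norm hp0')
        (fun x => by simp only [hper x]) h
      rw [hN0, hI0]
      congr 1
    have hG3 : (∫ x in (0:ℝ)..1, r x ^ p) ^ (1/p) ≤ (h^2/2) * N2 := by
      have hm := masterT hp w g hwc hgc hwnn hgnn hgper hh
      rw [hWval] at hm
      have : (∫ x in (0:ℝ)..1, r x ^ p) ^ (1/p) ≤ ((h^2/2) ^ p * I2) ^ (1/p) :=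
        Real.rpow_le_rpow (int_nonneg _ (fun x => Real.rpow_nonneg (hrnn x) p) zero_le_one)
          hm (by positivity)
      calc (∫ x in (0:ℝ)..1, r x ^ p) ^ (1/p) ≤ ((h^2/2) ^ p * I2) ^ (1/p) := this
        _ = (h^2/2) * N2 := by
          rw [Real.mul_rpow (Real.rpow_nonneg (by positivity) p) hI2nn,
            ← Real.rpow_mul (by positivity : (0:ℝ) ≤ h^2/2),
            mul_one_div_cancel hp0.ne', Real.rpow_one]
    rw [hLHS, hG1] at hmink
    have : h * N1 ≤ N0 + N0 + (h^2/2) * N2 := by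
      calc h * N1 ≤ N0 + (∫ x in (0:ℝ)..1, ‖v x‖ ^ p) ^ (1/p)
          + (∫ x in (0:ℝ)..1, r x ^ p) ^ (1/p) := hmink
        _ = N0 + N0 + (∫ x in (0:ℝ)..1, r x ^ p) ^ (1/p) := by rw [← hI0, ← hN0]
        _ ≤ N0 + N0 + (h^2/2) * N2 := by linarith [hG3]
    linarith
  have hN0nn : 0 ≤ N0 := Real.rpow_nonneg hI0nn _
  have hN1nn : 0 ≤ N1 := Real.rpow_nonneg hI1nn _
  have hN2nn : 0 ≤ N2 := Real.rpow_nonneg hI2nn _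
  exact combine hN1nn hN0nn hN2nn caseA caseB

end Base


lemma iterDeriv_comp (f : ℝ → ℂ) (m j : ℕ) :
    iteratedDeriv m (iteratedDeriv j f) = iteratedDeriv (m + j) f := by
  induction m with
  | zero => simp
  | succ m ih =>
    rw [show m+1+j = (m+j)+1 by omega]
    simp only [iteratedDeriv_succ]
    rw [ih]

lemma iterPeriodic (f : ℝ → ℂ) (hf : ∀ x, f (x+1) = f x) (j : ℕ) :
    ∀ x, iteratedDeriv j f (x+1) = iteratedDeriv j f x := by
  induction j with
  | zero => simpa using hf
  | succ j ih =>
    intro x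
    rw [iteratedDeriv_succ]
    exact derivPeriodic _ ih x

lemma natexp (k l : ℕ) (hk : 2 ≤ k) (hl : l ≤ k) : l * (k - l) ≤ 3 * 2^(k-2) - 2 := by
  obtain ⟨m, rfl⟩ : ∃ m, k = m + 2 := ⟨k - 2, by omega⟩
  rw [show m + 2 - 2 = m by omega]
  obtain ⟨d, hd⟩ : ∃ d, m + 2 = l + d := ⟨m + 2 - l, by omega⟩
  rw [hd, show l + d - l = d by omega]
  have key : ∀ n : ℕ, (n+2)*(n+2) + 8 ≤ 12 * 2^n := by
    intro n
    induction n with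
    | zero => norm_num
    | succ n ih =>
      have h2 : n + 1 ≤ 2^n := Nat.lt_two_pow_self
      have h3 : 2^(n+1) = 2 * 2^n := by rw [pow_succ]; ring
      nlinarith
  have sq : 4*(l*d) ≤ (l+d)*(l+d) := by
    rcases le_total l d with h | h
    · obtain ⟨e, rfl⟩ : ∃ e, d = l + e := ⟨d - l, by omega⟩
      ring_nf
      nlinarith [Nat.zero_le (e*e), Nat.zero_le l]
    · obtain ⟨e, rfl⟩ : ∃ e, l = d + e := ⟨l - d, by omega⟩
      ring_nf
      nlinarith [Nat.zero_le (e*e), Nat.zero_le d]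
  have key' := key m
  rw [hd] at key'
  omega



end GN15

theorem stmt_15 (k : ℕ) (hk : 2 ≤ k) (p : ℝ) (hp : 1 < p)
    (u : ℝ → ℂ) (hu : ContDiff ℝ (k : ℕ∞) u)
    (hper : ∀ x : ℝ, u (x + 1) = u x) :
    ∀ l : ℕ, l ≤ k →
      (∫ x in (0 : ℝ)..1, ‖iteratedDeriv l u x‖ ^ p) ^ ((1 : ℝ) / p) ≤
        2 ^ (3 * 2 ^ (k - 2) - 2 : ℕ) * (p / (p - 1)) *
          (∫ x in (0 : ℝ)..1, ‖u x‖ ^ p) ^ ((1 / p) * (1 - (l : ℝ) / (k : ℝ))) *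
          (∫ x in (0 : ℝ)..1, ‖iteratedDeriv k u x‖ ^ p) ^
            ((1 / p) * ((l : ℝ) / (k : ℝ))) := by
  intro l hl
  have hp0 : 0 < p := lt_trans zero_lt_one hp
  have hp1' : 0 < p - 1 := by linarith
  have hkR : (0:ℝ) < (k:ℝ) := by
    have : 0 < k := by omega
    exact_mod_cast this
  set N : ℕ → ℝ := fun j => (∫ x in (0:ℝ)..1, ‖iteratedDeriv j u x‖ ^ p) ^ ((1:ℝ)/p) with hN
  have hNn : ∀ j, 0 ≤ N j := fun j => Real.rpow_nonneg
    (GN15.int_nonneg _ (fun x => Real.rpow_nonneg (norm_nonneg _) p) zero_le_one) _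
  have hcont : ∀ m : ℕ, m ≤ k → Continuous (iteratedDeriv m u) := by
    intro m hm
    exact hu.continuous_iteratedDeriv m (by exact_mod_cast hm)
  have hdiff : ∀ m : ℕ, m < k → Differentiable ℝ (iteratedDeriv m u) := by
    intro m hm
    exact hu.differentiable_iteratedDeriv m (by exact_mod_cast hm)
  have hchain : ∀ j, j + 2 ≤ k → N (j+1)^2 ≤ (2:ℝ)^2 * (N j * N (j+2)) := by
    intro j hj
    have e1 : iteratedDeriv (j+1) u = deriv (iteratedDeriv j u) := iteratedDeriv_succ
    have e2 : iteratedDeriv (j+2) u = deriv (deriv (iteratedDeriv j u)) := by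
      rw [show j+2 = (j+1)+1 from rfl, iteratedDeriv_succ, iteratedDeriv_succ]
    have hb := GN15.baseIneq hp (iteratedDeriv j u)
      (hdiff j (by omega))
      (by rw [← e1]; exact hcont (j+1) (by omega))
      (by rw [← e1]; exact hdiff (j+1) (by omega))
      (by rw [← e2]; exact hcont (j+2) (by omega))
      (GN15.iterPeriodic u hper j)
    rw [← e2, ← e1] at hb
    calc N (j+1)^2 ≤ 4 * (N j * N (j+2)) := hb
      _ = (2:ℝ)^2 * (N j * N (j+2)) := by norm_num
  have hchainres := GN15.chain 2 (by norm_num) k N hNn hchain l hl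
  -- real exponents
  set a : ℝ := ((k-l:ℕ):ℝ)/(k:ℝ) with ha
  set bb : ℝ := (l:ℝ)/(k:ℝ) with hbb
  have hann : 0 ≤ a := by positivity
  have hbnn : 0 ≤ bb := by positivity
  set R : ℝ := 2^(l*(k-l)) * (N 0 ^ a * N k ^ bb) with hR
  have hRnn : 0 ≤ R := by
    have := hNn 0
    have := hNn k
    positivity
  have hRk : R ^ k = 2^(l*(k-l)*k) * (N 0 ^ (k-l) * N k ^ l) := by
    rw [hR, mul_pow, mul_pow, ← pow_mul]
    congr 1
    congr 1
    · rw [← Real.rpow_natCast (N 0 ^ a) k, ← Real.rpow_mul (hNn 0), ha,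
        div_mul_cancel₀ _ (ne_of_gt hkR), Real.rpow_natCast]
    · rw [← Real.rpow_natCast (N k ^ bb) k, ← Real.rpow_mul (hNn k), hbb,
        div_mul_cancel₀ _ (ne_of_gt hkR), Real.rpow_natCast]
  have hNlR : N l ≤ R := by
    apply (pow_le_pow_iff_left₀ (hNn l) hRnn (by omega : k ≠ 0)).mp
    rw [hRk]
    exact hchainres
  -- unfold N 0, N k in terms of statement integrals
  set I0 : ℝ := ∫ x in (0:ℝ)..1, ‖u x‖ ^ p with hI0
  set Ik : ℝ := ∫ x in (0:ℝ)..1, ‖iteratedDeriv k u x‖ ^ p with hIk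
  have hI0nn : 0 ≤ I0 :=
    GN15.int_nonneg _ (fun x => Real.rpow_nonneg (norm_nonneg _) p) zero_le_one
  have hIknn : 0 ≤ Ik :=
    GN15.int_nonneg _ (fun x => Real.rpow_nonneg (norm_nonneg _) p) zero_le_one
  have hN0e : N 0 = I0 ^ ((1:ℝ)/p) := by
    rw [hN]
    simp only [iteratedDeriv_zero]
    rfl
  have hNke : N k = Ik ^ ((1:ℝ)/p) := rfl
  have hexp0 : N 0 ^ a = I0 ^ ((1/p) * (1 - (l:ℝ)/(k:ℝ))) := by
    rw [hN0e, ← Real.rpow_mul hI0nn]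
    congr 1
    rw [ha, Nat.cast_sub hl]
    field_simp
  have hexpk : N k ^ bb = Ik ^ ((1/p) * ((l:ℝ)/(k:ℝ))) := by
    rw [hNke, ← Real.rpow_mul hIknn]
  have hconst : (2:ℝ)^(l*(k-l)) ≤ 2 ^ (3 * 2 ^ (k - 2) - 2 : ℕ) * (p / (p - 1)) := by
    have c1 : (2:ℝ)^(l*(k-l)) ≤ 2 ^ (3 * 2 ^ (k - 2) - 2 : ℕ) :=
      pow_le_pow_right₀ one_le_two (GN15.natexp k l hk hl)
    have c2 : 1 ≤ p / (p - 1) := by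
      rw [le_div_iff₀ hp1']
      linarith
    calc (2:ℝ)^(l*(k-l)) = (2:ℝ)^(l*(k-l)) * 1 := by ring
      _ ≤ 2 ^ (3 * 2 ^ (k - 2) - 2 : ℕ) * (p / (p - 1)) :=
        mul_le_mul c1 c2 zero_le_one (by positivity)
  calc (∫ x in (0 : ℝ)..1, ‖iteratedDeriv l u x‖ ^ p) ^ ((1 : ℝ) / p) = N l := rfl
    _ ≤ R := hNlR
    _ = 2^(l*(k-l)) * (I0 ^ ((1/p) * (1 - (l:ℝ)/(k:ℝ))) * Ik ^ ((1/p) * ((l:ℝ)/(k:ℝ)))) := by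
        rw [hR, hexp0, hexpk]
    _ ≤ (2 ^ (3 * 2 ^ (k - 2) - 2 : ℕ) * (p / (p - 1))) *
        (I0 ^ ((1/p) * (1 - (l:ℝ)/(k:ℝ))) * Ik ^ ((1/p) * ((l:ℝ)/(k:ℝ)))) := by
        apply mul_le_mul_of_nonneg_right hconst
        positivity
    _ = 2 ^ (3 * 2 ^ (k - 2) - 2 : ℕ) * (p / (p - 1)) *
          I0 ^ ((1/p) * (1 - (l:ℝ)/(k:ℝ))) * Ik ^ ((1/p) * ((l:ℝ)/(k:ℝ))) := by
        ring
end
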